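/- (Representation, direction B.) Let 𝒢 = ⟨G_u, H_u, ς_{u→v}⟩ over ⟨κ_o, κ_J, κ_I, ≤_κ⟩ be a bunch of layer groups. Form X = ⋃̇_{u∈κ} L_u, where L_u = G_u ⊔ •H_u (•H_u a disjoint copy of H_u) for u ∈ κ_I and L_u = G_u otherwise; let γ_u : L_u → G_u send •a to a and fix G_u, let ρ_v(x) = x if x ∈ L_u with u ≥_κ v and ρ_v(x) = ς_{u→v}(γ_u(x)) if u <_κ v; order each L_u by inserting •a immediately below a, and order X by: x < y iff ρ_{uv}(x) <_{uv} ρ_{uv}(y) or (ρ_{uv}(x) = ρ_{uv}(y) and u <_κ v), where x ∈ L_u, y ∈ L_v, uv = max(u,v); define x·y = ρ_{uv}(x) ∗_{uv} ρ_{uv}(y), where on L_w the product ∗_w is (γ_w(x)·_w γ_w(y))• if w ∈ κ_I, γ_w(x)·_w γ_w(y) ∈ H_w and not both x, y ∈ H_w, and γ_w(x)·_w γ_w(y) otherwise; define the complement x^⊥ as (γ_u(x)^{-1_u})• if u ∈ κ_I and x ∈ H_u, (γ_u(x)^{-1_u})_↓ if u ∈ κ_J, and γ_u(x)^{-1_u}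 otherwise; set x→y = (x·y^⊥)^⊥, t = the least element of κ, and f = t^⊥. Then X_𝒢 = (X, ≤, ·, →, t, f) is an involutive FL_e-chain whose residual complement is x ↦ x^⊥; moreover X_𝒢 is odd if t ∈ κ_o, even with non-idempotent falsum if t ∈ κ_J, and even with idempotent falsum if t ∈ κ_I. -/
import Mathlib


open Classical

universe u v

/-- An FL_e-chain: a totally ordered commutative monoid with a residuation operation
`imp` (so that `x * y ≤ z ↔ y ≤ imp x z`) and a falsum constant `fc`.
The monoid unit `1` plays the role of the constant `t`. -/
class FLeChain (X : Type u) extends LinearOrder X, CommMonoid X where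
  imp : X → X → X
  fc : X
  residuation : ∀ x y z : X, x * y ≤ z ↔ y ≤ imp x z

namespace FLe

variable {X : Type u}

/-- The residual `x → y`. -/
def imp [FLeChain X] (x y : X) : X := FLeChain.imp x y

/-- The falsum constant `f`. -/
def fc (X : Type u) [FLeChain X] : X := FLeChain.fc

/-- The residual complement `x' = x → f`. -/
def compl [FLeChain X] (x : X) : X := imp x (fc X)

/-- An FL_e-chain is involutive if `x'' = x` for all `x`. -/
def Involutive (X : Type u) [FLeChain X] : Prop := ∀ x : X, compl (compl x) = x

/-- An involutive FL_e-chain is odd if `t' = t`. -/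
def OddChain (X : Type u) [FLeChain X] : Prop := compl (1 : X) = 1

/-- An involutive FL_e-chain is even if `x < t ↔ x ≤ f` for all `x`. -/
def EvenChain (X : Type u) [FLeChain X] : Prop := ∀ x : X, x < 1 ↔ x ≤ fc X

/-- Odd or even involutive FL_e-chain. -/
def OddEven (X : Type u) [FLeChain X] : Prop := Involutive X ∧ (OddChain X ∨ EvenChain X)

/-- `x` is idempotent. -/
def IsIdem [Mul X] (x : X) : Prop := x * x = x

/-- Homomorphisms of FL_e-chains: order preserving, multiplicative, residual preserving,
and preserving both constants. -/
def IsFLeHom (X : Type u) (Y : Type v) [FLeChain X] [FLeChain Y] (φ : X → Y) : Prop :=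
  Monotone φ ∧ (∀ a b : X, φ (a * b) = φ a * φ b) ∧
    (∀ a b : X, φ (imp a b) = imp (φ a) (φ b)) ∧ φ (1 : X) = 1 ∧ φ (fc X) = fc Y

/-- The skeleton `κ`: the set of positive idempotent elements. -/
def kappa (X : Type u) [FLeChain X] : Set X := {u : X | 1 ≤ u ∧ IsIdem u}

/-- `κ_o`: it is `{t}` if the chain is odd, empty otherwise. -/
def kappaO (X : Type u) [FLeChain X] : Set X := {u : X | u = 1 ∧ OddChain X}

/-- The layer `L_u = {x : x → x = u}`. -/
def layer [FLeChain X] (u : X) : Set X := {x : X | imp x x = u}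

/-- `H_u = {x ∈ L_u : x · u' < x}`, the set of `u`-invertible elements of the layer. -/
def Hs [FLeChain X] (u : X) : Set X := {x : X | x ∈ layer u ∧ x * compl u < x}

/-- The dotted copy `•H_u = {x · u' : x ∈ H_u}`. -/
def dotH [FLeChain X] (u : X) : Set X := (fun x => x * compl u) '' Hs u

/-- `u ∈ κ_I`: a positive idempotent whose complement is idempotent, not in `κ_o`. -/
def inKI [FLeChain X] (u : X) : Prop := u ∈ kappa X ∧ IsIdem (compl u) ∧ u ∉ kappaO X

/-- `u ∈ κ_J`: a positive idempotent whose complement is not idempotent. -/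
def inKJ [FLeChain X] (u : X) : Prop := u ∈ kappa X ∧ ¬ IsIdem (compl u)

/-- The layer group carrier: `G_u = L_u \ •H_u` if `u ∈ κ_I`, and `G_u = L_u` otherwise. -/
def Gs [FLeChain X] (u : X) : Set X := {x : X | x ∈ layer u ∧ (inKI u → x ∉ dotH u)}

/-- The layer group multiplication: `x ·_u y = ((x·y)→u)→u` if `u ∈ κ_I`, `x·y` otherwise. -/
noncomputable def gmul [FLeChain X] (u x y : X) : X :=
  if inKI u then imp (imp (x * y) u) u else x * y

/-- The layer group inversion `x^{-1_u} = x → u`. -/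
def ginv [FLeChain X] (u x : X) : X := imp x u

/-- The union of all layer group carriers. -/
def GX (X : Type u) [FLeChain X] : Set X := ⋃ u ∈ kappa X, Gs u

end FLe

/-! ### Bunches of layer groups -/

/-- The data of a bunch of layer groups over a skeleton type `K` with layers carried by
subsets of an ambient type `Λ`:  a least element `t`, a partition `(Ko, KJ, KI)` of the
skeleton, layer group carriers `G u` with distinguished subsets `H u`, layerwise group
operations `mul`, `inv`, `unit`, layerwise orders `le`, and transitions `tr u v`. -/
structure BunchData (K : Type u) (Λ : Type v) where
  t : K
  Ko : Set K
  KJ : Set K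
  KI : Set K
  G : K → Set Λ
  H : K → Set Λ
  mul : K → Λ → Λ → Λ
  inv : K → Λ → Λ
  unit : K → Λ
  le : K → Λ → Λ → Prop
  tr : K → K → Λ → Λ

namespace BunchData

variable {K : Type u} {Λ : Type v}

/-- Strict layerwise order. -/
def lt (B : BunchData K Λ) (u : K) (x y : Λ) : Prop := B.le u x y ∧ x ≠ y

/-- `p` is the lower cover of `x` in the layer group `G u`. -/
def IsLowerCoverIn (B : BunchData K Λ) (u : K) (p x : Λ) : Prop :=
  p ∈ B.G u ∧ B.lt u p x ∧ ∀ z ∈ B.G u, B.lt u z x → B.le u z p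

/-- `s` is the upper cover of `x` in the layer group `G u`. -/
def IsUpperCoverIn (B : BunchData K Λ) (u : K) (s x : Λ) : Prop :=
  s ∈ B.G u ∧ B.lt u x s ∧ ∀ z ∈ B.G u, B.lt u x z → B.le u s z

/-- The axioms of a bunch of layer groups:  a direct system of totally ordered abelian
groups over a totally ordered skeleton with least element `t` partitioned into
`Ko ∪ KJ ∪ KI`, satisfying (G1), (G2) and (G3). -/
structure IsBunch [LinearOrder K] (B : BunchData K Λ) : Prop where
  t_least : ∀ u : K, B.t ≤ u
  cover : ∀ u : K, u ∈ B.Ko ∨ u ∈ B.KJ ∨ u ∈ B.KI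
  disjOJ : ∀ u : K, ¬(u ∈ B.Ko ∧ u ∈ B.KJ)
  disjOI : ∀ u : K, ¬(u ∈ B.Ko ∧ u ∈ B.KI)
  disjJI : ∀ u : K, ¬(u ∈ B.KJ ∧ u ∈ B.KI)
  -- each layer is a totally ordered abelian group
  unit_mem : ∀ u : K, B.unit u ∈ B.G u
  mul_mem : ∀ u : K, ∀ x ∈ B.G u, ∀ y ∈ B.G u, B.mul u x y ∈ B.G u
  inv_mem : ∀ u : K, ∀ x ∈ B.G u, B.inv u x ∈ B.G u
  mul_assoc' : ∀ u : K, ∀ x ∈ B.G u, ∀ y ∈ B.G u, ∀ z ∈ B.G u,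
    B.mul u (B.mul u x y) z = B.mul u x (B.mul u y z)
  mul_comm' : ∀ u : K, ∀ x ∈ B.G u, ∀ y ∈ B.G u, B.mul u x y = B.mul u y x
  mul_unit' : ∀ u : K, ∀ x ∈ B.G u, B.mul u x (B.unit u) = x
  mul_inv' : ∀ u : K, ∀ x ∈ B.G u, B.mul u x (B.inv u x) = B.unit u
  le_refl' : ∀ u : K, ∀ x ∈ B.G u, B.le u x x
  le_trans' : ∀ u : K, ∀ x ∈ B.G u, ∀ y ∈ B.G u, ∀ z ∈ B.G u,
    B.le u x y → B.le u y z → B.le u x z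
  le_antisymm' : ∀ u : K, ∀ x ∈ B.G u, ∀ y ∈ B.G u, B.le u x y → B.le u y x → x = y
  le_total' : ∀ u : K, ∀ x ∈ B.G u, ∀ y ∈ B.G u, B.le u x y ∨ B.le u y x
  mul_le_mul' : ∀ u : K, ∀ x ∈ B.G u, ∀ y ∈ B.G u, ∀ z ∈ B.G u,
    B.le u x y → B.le u (B.mul u z x) (B.mul u z y)
  -- a direct system of o-group homomorphisms
  tr_mem : ∀ u v : K, u ≤ v → ∀ x ∈ B.G u, B.tr u v x ∈ B.G v
  tr_id : ∀ u : K, ∀ x ∈ B.G u, B.tr u u x = x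
  tr_comp : ∀ u v w : K, u ≤ v → v ≤ w → ∀ x ∈ B.G u, B.tr v w (B.tr u v x) = B.tr u w x
  tr_unit : ∀ u v : K, u ≤ v → B.tr u v (B.unit u) = B.unit v
  tr_mul : ∀ u v : K, u ≤ v → ∀ x ∈ B.G u, ∀ y ∈ B.G u,
    B.tr u v (B.mul u x y) = B.mul v (B.tr u v x) (B.tr u v y)
  tr_mono : ∀ u v : K, u ≤ v → ∀ x ∈ B.G u, ∀ y ∈ B.G u,
    B.le u x y → B.le v (B.tr u v x) (B.tr u v y)
  -- (G1)
  g1 : B.Ko ⊆ {B.t}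
  -- (G2): for v ∈ κ_I, H_v ≤ G_v and transitions from strictly below map into H_v
  g2_sub : ∀ v ∈ B.KI, B.H v ⊆ B.G v ∧ B.unit v ∈ B.H v ∧
    (∀ x ∈ B.H v, ∀ y ∈ B.H v, B.mul v x y ∈ B.H v) ∧ (∀ x ∈ B.H v, B.inv v x ∈ B.H v)
  g2_tr : ∀ v ∈ B.KI, ∀ u : K, u < v → ∀ x ∈ B.G u, B.tr u v x ∈ B.H v
  -- (G3): κ_J-layers are discretely ordered and transitions identify the unit with its
  -- lower cover
  g3_disc : ∀ u ∈ B.KJ, ∀ x ∈ B.G u,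
    (∃ p, B.IsLowerCoverIn u p x) ∧ (∃ s, B.IsUpperCoverIn u s x)
  g3_tr : ∀ u ∈ B.KJ, ∀ v : K, u < v → ∀ p, B.IsLowerCoverIn u p (B.unit u) →
    B.tr u v (B.unit u) = B.tr u v p

end BunchData

/-! ### The bunch of layer groups of an odd or even involutive FL_e-chain -/

namespace FLe

/-- The skeleton of an FL_e-chain, as a type. -/
abbrev kappaT (X : Type u) [FLeChain X] := {w : X // w ∈ kappa X}

/-- The bunch of layer groups `𝒢_X` of an FL_e-chain `X`
(Theorem KATEGOR_BUNCH_X/(A)). -/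
noncomputable def bunchOfChain (X : Type u) [FLeChain X] : BunchData (kappaT X) X where
  t := ⟨1, le_refl 1, mul_one 1⟩
  Ko := {w : kappaT X | (w : X) ∈ kappaO X}
  KJ := {w : kappaT X | inKJ (w : X)}
  KI := {w : kappaT X | inKI (w : X)}
  G w := Gs (w : X)
  H w := Hs (w : X)
  mul w x y := gmul (w : X) x y
  inv w x := ginv (w : X) x
  unit w := (w : X)
  le _ x y := x ≤ y
  tr _ v x := (v : X) * x

end FLe

/-! ### The involutive FL_e-chain of a bunch of layer groups -/

namespace BunchData

variable {K : Type u} {Λ : Type v}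

/-- Raw elements of the constructed chain live in `K × Λ × Bool`;  the element
`(u, z, false)` represents `z ∈ G_u ⊆ L_u`, and `(u, a, true)` represents the dotted copy
`•a ∈ •H_u` (for `u ∈ κ_I`, `a ∈ H_u`). -/
def carrier (B : BunchData K Λ) : Set (K × Λ × Bool) :=
  {p | (p.2.2 = false ∧ p.2.1 ∈ B.G p.1) ∨ (p.2.2 = true ∧ p.1 ∈ B.KI ∧ p.2.1 ∈ B.H p.1)}

variable [LinearOrder K]

/-- The map `ρ_v`: it fixes the layers indexed by `u ≥ v` and pushes the lower layers
into `G_v` by `ς_{u→v} ∘ γ_u`. -/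
def rho (B : BunchData K Λ) (v : K) (p : K × Λ × Bool) : K × Λ × Bool :=
  if v ≤ p.1 then p else (v, B.tr p.1 v p.2.1, false)

/-- The strict order within the layer `L_w`:  dotted copies are inserted immediately
below their originals. -/
def llt (B : BunchData K Λ) (w : K) (p q : K × Λ × Bool) : Prop :=
  B.lt w p.2.1 q.2.1 ∨ (p.2.1 = q.2.1 ∧ p.2.2 = true ∧ q.2.2 = false)

/-- The strict order of the constructed chain:
`x < y` iff `ρ_{uv}(x) <_{uv} ρ_{uv}(y)` or (`ρ_{uv}(x) = ρ_{uv}(y)` and `u <_κ v`). -/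
def glt (B : BunchData K Λ) (p q : K × Λ × Bool) : Prop :=
  B.llt (max p.1 q.1) (B.rho (max p.1 q.1) p) (B.rho (max p.1 q.1) q) ∨
    (B.rho (max p.1 q.1) p = B.rho (max p.1 q.1) q ∧ p.1 < q.1)

/-- The order of the constructed chain. -/
def gle (B : BunchData K Λ) (p q : K × Λ × Bool) : Prop := B.glt p q ∨ p = q

/-- The product `∗_w` within the layer `L_w`. -/
noncomputable def star (B : BunchData K Λ) (w : K) (p q : K × Λ × Bool) : K × Λ × Bool :=
  if w ∈ B.KI ∧ B.mul w p.2.1 q.2.1 ∈ B.H w ∧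
      ¬(p.2.1 ∈ B.H w ∧ p.2.2 = false ∧ q.2.1 ∈ B.H w ∧ q.2.2 = false)
  then (w, B.mul w p.2.1 q.2.1, true)
  else (w, B.mul w p.2.1 q.2.1, false)

/-- The multiplication of the constructed chain: `x · y = ρ_{uv}(x) ∗_{uv} ρ_{uv}(y)`. -/
noncomputable def gmulB (B : BunchData K Λ) (p q : K × Λ × Bool) : K × Λ × Bool :=
  B.star (max p.1 q.1) (B.rho (max p.1 q.1) p) (B.rho (max p.1 q.1) q)

/-- The lower cover of `y` in the layer group `G_u` (chosen classically). -/
noncomputable def lowerCoverFn (B : BunchData K Λ) (u : K) (y : Λ) : Λ :=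
  @Classical.epsilon Λ ⟨B.unit B.t⟩ (fun p => B.IsLowerCoverIn u p y)

/-- The residual complement `x^⊥` of the constructed chain. -/
noncomputable def negB (B : BunchData K Λ) (p : K × Λ × Bool) : K × Λ × Bool :=
  if p.1 ∈ B.KI ∧ p.2.2 = true then (p.1, B.inv p.1 p.2.1, false)
  else if p.1 ∈ B.KI ∧ p.2.1 ∈ B.H p.1 then (p.1, B.inv p.1 p.2.1, true)
  else if p.1 ∈ B.KJ then (p.1, B.lowerCoverFn p.1 (B.inv p.1 p.2.1), false)
  else (p.1, B.inv p.1 p.2.1, false)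

/-- The residual of the constructed chain: `x → y = (x · y^⊥)^⊥`. -/
noncomputable def impB (B : BunchData K Λ) (p q : K × Λ × Bool) : K × Λ × Bool :=
  B.negB (B.gmulB p (B.negB q))

/-- The unit `t` of the constructed chain. -/
def tB (B : BunchData K Λ) : K × Λ × Bool := (B.t, B.unit B.t, false)

/-- The falsum `f = t^⊥` of the constructed chain. -/
noncomputable def fB (B : BunchData K Λ) : K × Λ × Bool := B.negB B.tB

end BunchData

/-! ### Chain operations on a subset of an ambient type, and the induced layer data -/

/-- The operations of an FL_e-chain carried by a subset `C` of an ambient type `A`. -/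
structure ChainOps (A : Type u) where
  C : Set A
  mul : A → A → A
  imp : A → A → A
  le : A → A → Prop
  t : A
  f : A

namespace ChainOps

variable {A : Type u} (O : ChainOps A)

def lt (x y : A) : Prop := O.le x y ∧ x ≠ y
def compl (x : A) : A := O.imp x O.f
def IsIdem (x : A) : Prop := O.mul x x = x
def kappa : Set A := {w : A | w ∈ O.C ∧ O.le O.t w ∧ O.IsIdem w}
def isOdd : Prop := O.compl O.t = O.t
def kappaO : Set A := {w : A | w = O.t ∧ O.isOdd}
def inKI (w : A) : Prop := w ∈ O.kappa ∧ O.IsIdem (O.compl w) ∧ w ∉ O.kappaO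
def inKJ (w : A) : Prop := w ∈ O.kappa ∧ ¬ O.IsIdem (O.compl w)
def layer (w : A) : Set A := {x : A | x ∈ O.C ∧ O.imp x x = w}
def Hs (w : A) : Set A := {x : A | x ∈ O.layer w ∧ O.lt (O.mul x (O.compl w)) x}
def dotH (w : A) : Set A := (fun x => O.mul x (O.compl w)) '' O.Hs w
def Gs (w : A) : Set A := {x : A | x ∈ O.layer w ∧ (O.inKI w → x ∉ O.dotH w)}
noncomputable def gmul (w x y : A) : A :=
  if O.inKI w then O.imp (O.imp (O.mul x y) w) w else O.mul x y
def ginv (w x : A) : A := O.imp x w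
def tr (v x : A) : A := O.mul v x

end ChainOps

/-! ### Bunch homomorphisms -/

/-- A bunch homomorphism from `B₁` to `B₂`, given by its skeleton part `σ` and its action
`Φ` on the union of the layer groups;  conditions (S1)–(S8). -/
def IsBunchHomB {K₁ Λ₁ K₂ Λ₂ : Type*}
    [LinearOrder K₁] [LinearOrder K₂]
    (B₁ : BunchData K₁ Λ₁) (B₂ : BunchData K₂ Λ₂) (σ : K₁ → K₂) (Φ : Λ₁ → Λ₂) : Prop :=
  -- (S1): the skeleton part is isotone
  Monotone σ ∧
  -- (S2): each Φ_u is an o-group homomorphism from G_u into G_{σ u}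
  (∀ u : K₁, ∀ x ∈ B₁.G u, Φ x ∈ B₂.G (σ u)) ∧
  (∀ u : K₁, Φ (B₁.unit u) = B₂.unit (σ u)) ∧
  (∀ u : K₁, ∀ x ∈ B₁.G u, ∀ y ∈ B₁.G u, Φ (B₁.mul u x y) = B₂.mul (σ u) (Φ x) (Φ y)) ∧
  (∀ u : K₁, ∀ x ∈ B₁.G u, Φ (B₁.inv u x) = B₂.inv (σ u) (Φ x)) ∧
  (∀ u : K₁, ∀ x ∈ B₁.G u, ∀ y ∈ B₁.G u, B₁.le u x y → B₂.le (σ u) (Φ x) (Φ y)) ∧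
  -- (S3): Φ commutes with the transitions
  (∀ u v : K₁, u ≤ v → ∀ x ∈ B₁.G u, Φ (B₁.tr u v x) = B₂.tr (σ u) (σ v) (Φ x)) ∧
  -- (S4): the least element of the skeleton is preserved
  σ B₁.t = B₂.t ∧
  -- (S5): the partition is respected
  (∀ u ∈ B₁.Ko, σ u ∈ B₂.Ko) ∧
  (∀ u ∈ B₁.KJ, σ u ∈ B₂.KJ ∨ σ u ∈ B₂.Ko) ∧
  (∀ u ∈ B₁.KI, σ u ∈ B₂.KI ∨ σ u ∈ B₂.Ko) ∧
  -- (S6): subgroups and their complements are preserved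
  (∀ u ∈ B₁.KI, σ u ∈ B₂.KI →
    (∀ x ∈ B₁.H u, Φ x ∈ B₂.H (σ u)) ∧
    (∀ x ∈ B₁.G u, x ∉ B₁.H u → Φ x ∈ B₂.G (σ u) ∧ Φ x ∉ B₂.H (σ u))) ∧
  -- (S7): the neighborhood operations are respected
  (∀ u ∈ B₁.KJ, σ u ∈ B₂.KJ →
    ∀ x ∈ B₁.G u, ∀ p, B₁.IsLowerCoverIn u p x → B₂.IsLowerCoverIn (σ u) (Φ p) (Φ x)) ∧
  (∀ u ∈ B₁.KJ, σ u ∈ B₂.Ko →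
    ∀ x ∈ B₁.G u, ∀ p, B₁.IsLowerCoverIn u p x → Φ p = Φ x) ∧
  -- (S8): partial injectivity
  (∀ u v : K₁, ∀ x ∈ B₁.G u, ∀ y ∈ B₁.G v,
    σ (max u v) ∈ B₂.KI →
    B₁.tr u (max u v) x ∈ B₁.H (max u v) →
    B₁.IsLowerCoverIn (max u v) (B₁.tr v (max u v) y) (B₁.tr u (max u v) x) →
    B₂.IsLowerCoverIn (σ (max u v)) (Φ (B₁.tr v (max u v) y)) (Φ (B₁.tr u (max u v) x)))

/-- An isomorphism in the category of bunches of layer groups. -/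
def IsBunchIso {K₁ Λ₁ K₂ Λ₂ : Type*}
    [LinearOrder K₁] [LinearOrder K₂]
    (B₁ : BunchData K₁ Λ₁) (B₂ : BunchData K₂ Λ₂) (σ : K₁ → K₂) (Φ : Λ₁ → Λ₂) : Prop :=
  IsBunchHomB B₁ B₂ σ Φ ∧
    ∃ (σ' : K₂ → K₁) (Φ' : Λ₂ → Λ₁), IsBunchHomB B₂ B₁ σ' Φ' ∧
      (∀ u : K₁, σ' (σ u) = u) ∧ (∀ v : K₂, σ (σ' v) = v) ∧
      (∀ u : K₁, ∀ x ∈ B₁.G u, Φ' (Φ x) = x) ∧ (∀ v : K₂, ∀ y ∈ B₂.G v, Φ (Φ' y) = y)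

namespace FLe

/-- The extension of a bunch homomorphism `Φ` between the bunches of two chains to the
whole chain: on `G_u` it is `Φ`, and the dotted copy `•a ∈ •H_u` is sent to `Φ(a)` if
`Φ(u) ∈ κ_o`, and to the dotted copy `•(Φ a)` if `Φ(u) ∈ κ_I`. -/
noncomputable def extendHom (X : Type u) (Y : Type v) [FLeChain X] [FLeChain Y]
    (Φ : X → Y) (x : X) : Y :=
  if x ∈ Gs (imp x x) then Φ x
  else if inKI (Φ (imp x x)) then Φ (imp (compl x) (imp x x)) * compl (Φ (imp x x))
  else Φ (imp (compl x) (imp x x))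

end FLe

open FLe BunchData

namespace BunchData
set_option linter.unusedSectionVars false

variable {K : Type u} {Λ : Type v} [LinearOrder K] {B : BunchData K Λ}

section Group

variable (hB : B.IsBunch) {u : K}
include hB

lemma unit_mul (hx : x ∈ B.G u) : B.mul u (B.unit u) x = x := by
  rw [hB.mul_comm' u (B.unit u) (hB.unit_mem u) x hx]
  exact hB.mul_unit' u x hx

lemma inv_unique (hx : x ∈ B.G u) (hy : y ∈ B.G u) (h : B.mul u x y = B.unit u) :
    y = B.inv u x := by
  have h1 : B.mul u y (B.mul u x (B.inv u x)) = B.mul u (B.mul u y x) (B.inv u x) :=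
    (hB.mul_assoc' u y hy x hx (B.inv u x) (hB.inv_mem u x hx)).symm
  rw [hB.mul_inv' u x hx, hB.mul_unit' u y hy, hB.mul_comm' u y hy x hx, h,
    unit_mul hB (hB.inv_mem u x hx)] at h1
  exact h1

lemma inv_unit : B.inv u (B.unit u) = B.unit u :=
  (inv_unique hB (hB.unit_mem u) (hB.unit_mem u)
    (hB.mul_unit' u _ (hB.unit_mem u))).symm

lemma inv_inv (hx : x ∈ B.G u) : B.inv u (B.inv u x) = x :=
  (inv_unique hB (hB.inv_mem u x hx) hx
    (by rw [hB.mul_comm' u _ (hB.inv_mem u x hx) x hx]; exact hB.mul_inv' u x hx)).symm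

lemma inv_mul (hx : x ∈ B.G u) (hy : y ∈ B.G u) :
    B.inv u (B.mul u x y) = B.mul u (B.inv u x) (B.inv u y) := by
  refine (inv_unique hB (hB.mul_mem u x hx y hy)
    (hB.mul_mem u _ (hB.inv_mem u x hx) _ (hB.inv_mem u y hy)) ?_).symm
  have hix := hB.inv_mem u x hx; have hiy := hB.inv_mem u y hy
  calc B.mul u (B.mul u x y) (B.mul u (B.inv u x) (B.inv u y))
      = B.mul u x (B.mul u y (B.mul u (B.inv u x) (B.inv u y))) :=
        hB.mul_assoc' u x hx y hy _ (hB.mul_mem u _ hix _ hiy)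
    _ = B.mul u x (B.mul u (B.mul u y (B.inv u x)) (B.inv u y)) := by
        rw [hB.mul_assoc' u y hy _ hix _ hiy]
    _ = B.mul u x (B.mul u (B.mul u (B.inv u x) y) (B.inv u y)) := by
        rw [hB.mul_comm' u y hy _ hix]
    _ = B.mul u x (B.mul u (B.inv u x) (B.mul u y (B.inv u y))) := by
        rw [hB.mul_assoc' u _ hix y hy _ hiy]
    _ = B.mul u x (B.mul u (B.inv u x) (B.unit u)) := by rw [hB.mul_inv' u y hy]
    _ = B.mul u x (B.inv u x) := by rw [hB.mul_unit' u _ hix]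
    _ = B.unit u := hB.mul_inv' u x hx

lemma mul_cancel (hz : z ∈ B.G u) (hx : x ∈ B.G u) (hy : y ∈ B.G u)
    (h : B.mul u z x = B.mul u z y) : x = y := by
  have hiz := hB.inv_mem u z hz
  have h1 : B.mul u (B.inv u z) (B.mul u z x) = B.mul u (B.inv u z) (B.mul u z y) := by
    rw [h]
  rw [← hB.mul_assoc' u _ hiz z hz x hx, ← hB.mul_assoc' u _ hiz z hz y hy,
    hB.mul_comm' u _ hiz z hz, hB.mul_inv' u z hz, unit_mul hB hx, unit_mul hB hy] at h1
  exact h1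

lemma tr_inv {v : K} (huv : u ≤ v) (hx : x ∈ B.G u) :
    B.tr u v (B.inv u x) = B.inv v (B.tr u v x) := by
  refine inv_unique hB (hB.tr_mem u v huv x hx)
    (hB.tr_mem u v huv _ (hB.inv_mem u x hx)) ?_
  rw [← hB.tr_mul u v huv x hx _ (hB.inv_mem u x hx), hB.mul_inv' u x hx,
    hB.tr_unit u v huv]

/-- order toolkit -/
lemma le_of_lt' {x y : Λ} (h : B.lt u x y) : B.le u x y := h.1

lemma not_le_iff (hx : x ∈ B.G u) (hy : y ∈ B.G u) :
    ¬ B.le u x y ↔ B.lt u y x := by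
  constructor
  · intro h
    rcases hB.le_total' u x hx y hy with h1 | h1
    · exact absurd h1 h
    · exact ⟨h1, fun e => h (e ▸ hB.le_refl' u x hx)⟩
  · rintro ⟨h1, h2⟩ h3
    exact h2 (hB.le_antisymm' u y hy x hx h1 h3)

lemma lt_of_le_ne (h : B.le u x y) (h2 : x ≠ y) : B.lt u x y := ⟨h, h2⟩

lemma lt_trans' (hx : x ∈ B.G u) (hy : y ∈ B.G u) (hz : z ∈ B.G u)
    (h1 : B.lt u x y) (h2 : B.lt u y z) : B.lt u x z := by
  refine ⟨hB.le_trans' u x hx y hy z hz h1.1 h2.1, fun e => ?_⟩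
  subst e
  exact h2.2 (hB.le_antisymm' u y hy x hx h2.1 h1.1)

lemma lt_of_le_of_lt' (hx : x ∈ B.G u) (hy : y ∈ B.G u) (hz : z ∈ B.G u)
    (h1 : B.le u x y) (h2 : B.lt u y z) : B.lt u x z := by
  refine ⟨hB.le_trans' u x hx y hy z hz h1 h2.1, fun e => ?_⟩
  subst e
  exact h2.2 (hB.le_antisymm' u y hy x hx h2.1 h1)

lemma lt_of_lt_of_le' (hx : x ∈ B.G u) (hy : y ∈ B.G u) (hz : z ∈ B.G u)
    (h1 : B.lt u x y) (h2 : B.le u y z) : B.lt u x z := by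
  refine ⟨hB.le_trans' u x hx y hy z hz h1.1 h2, fun e => ?_⟩
  subst e
  exact h1.2 (hB.le_antisymm' u x hx y hy h1.1 h2)

lemma lt_irrefl' (hx : x ∈ B.G u) (h : B.lt u x x) : False := h.2 rfl

lemma mul_lt_mul' (hx : x ∈ B.G u) (hy : y ∈ B.G u) (hz : z ∈ B.G u)
    (h : B.lt u x y) : B.lt u (B.mul u z x) (B.mul u z y) := by
  refine ⟨hB.mul_le_mul' u x hx y hy z hz h.1, fun e => h.2 ?_⟩
  exact mul_cancel hB hz hx hy e

lemma le_of_mul_le_mul (hx : x ∈ B.G u) (hy : y ∈ B.G u) (hz : z ∈ B.G u)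
    (h : B.le u (B.mul u z x) (B.mul u z y)) : B.le u x y := by
  by_contra hc
  rw [not_le_iff hB hx hy] at hc
  have := mul_lt_mul' hB hy hx hz hc
  exact this.2 (hB.le_antisymm' u _ (hB.mul_mem u z hz y hy) _ (hB.mul_mem u z hz x hx)
    this.1 h)

lemma mul_le_mul_iff (hx : x ∈ B.G u) (hy : y ∈ B.G u) (hz : z ∈ B.G u) :
    B.le u (B.mul u z x) (B.mul u z y) ↔ B.le u x y :=
  ⟨le_of_mul_le_mul hB hx hy hz, fun h => hB.mul_le_mul' u x hx y hy z hz h⟩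

lemma mul_lt_mul_iff (hx : x ∈ B.G u) (hy : y ∈ B.G u) (hz : z ∈ B.G u) :
    B.lt u (B.mul u z x) (B.mul u z y) ↔ B.lt u x y :=
  ⟨fun h => ⟨le_of_mul_le_mul hB hx hy hz h.1, fun e => h.2 (by rw [e])⟩,
   mul_lt_mul' hB hx hy hz⟩

end Group

end BunchData
namespace BunchData

set_option linter.unusedSectionVars false
section Order

variable {K : Type u} {Λ : Type v} [LinearOrder K]

/-- value of `p` at level `n` -/
def Vl (B : BunchData K Λ) (n : K) (p : K × Λ × Bool) : Λ := (B.rho n p).2.1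

/-- dot of `p` at level `n` -/
def Dl (B : BunchData K Λ) (n : K) (p : K × Λ × Bool) : Bool := (B.rho n p).2.2

variable {B : BunchData K Λ}

lemma Vl_of_le {n : K} {p : K × Λ × Bool} (h : n ≤ p.1) : B.Vl n p = p.2.1 := by
  simp [Vl, rho, h]

lemma Vl_of_lt {n : K} {p : K × Λ × Bool} (h : p.1 < n) :
    B.Vl n p = B.tr p.1 n p.2.1 := by
  simp [Vl, rho, not_le.2 h]

lemma Dl_of_le {n : K} {p : K × Λ × Bool} (h : n ≤ p.1) : B.Dl n p = p.2.2 := by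
  simp [Dl, rho, h]

lemma Dl_of_lt {n : K} {p : K × Λ × Bool} (h : p.1 < n) : B.Dl n p = false := by
  simp [Dl, rho, not_le.2 h]

lemma rho_fst {n : K} {p : K × Λ × Bool} (h : p.1 ≤ n) : (B.rho n p).1 = n := by
  rcases eq_or_lt_of_le h with h1 | h1
  · simp [rho, ← h1]
  · simp [rho, not_le.2 h1]

lemma rho_eq_iff {n : K} {p q : K × Λ × Bool} (hp : p.1 ≤ n) (hq : q.1 ≤ n) :
    B.rho n p = B.rho n q ↔ (B.Vl n p = B.Vl n q ∧ B.Dl n p = B.Dl n q) := by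
  constructor
  · intro h; exact ⟨congrArg (fun x => x.2.1) h, congrArg (fun x => x.2.2) h⟩
  · rintro ⟨h1, h2⟩
    have := rho_fst (B := B) hp
    have := rho_fst (B := B) hq
    apply Prod.ext
    · rw [rho_fst hp, rho_fst hq]
    · exact Prod.ext h1 h2

/-- The main characterization of the strict order. -/
lemma glt_iff (p q : K × Λ × Bool) : B.glt p q ↔
    (B.lt (max p.1 q.1) (B.Vl (max p.1 q.1) p) (B.Vl (max p.1 q.1) q) ∨
      (B.Vl (max p.1 q.1) p = B.Vl (max p.1 q.1) q ∧
        ((B.Dl (max p.1 q.1) p = true ∧ B.Dl (max p.1 q.1) q = false) ∨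
         (B.Dl (max p.1 q.1) p = B.Dl (max p.1 q.1) q ∧ p.1 < q.1)))) := by
  rw [glt, llt, rho_eq_iff (le_max_left _ _) (le_max_right _ _)]
  show (B.lt _ (B.Vl _ p) (B.Vl _ q) ∨
    (B.Vl _ p = B.Vl _ q ∧ B.Dl _ p = true ∧ B.Dl _ q = false)) ∨ _ ↔ _
  tauto

variable (hB : B.IsBunch)
include hB

lemma mem_G_of_carrier {p : K × Λ × Bool} (hp : p ∈ B.carrier) : p.2.1 ∈ B.G p.1 := by
  rcases hp with ⟨_, h⟩ | ⟨_, h1, h2⟩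
  · exact h
  · exact (hB.g2_sub p.1 h1).1 h2

omit hB in
lemma dotted_KI {p : K × Λ × Bool} (hp : p ∈ B.carrier) (hd : p.2.2 = true) :
    p.1 ∈ B.KI ∧ p.2.1 ∈ B.H p.1 := by
  rcases hp with ⟨h, _⟩ | ⟨_, h1, h2⟩
  · rw [hd] at h; exact absurd h (by simp)
  · exact ⟨h1, h2⟩

lemma Vl_mem {n : K} {p : K × Λ × Bool} (hp : p ∈ B.carrier) (h : p.1 ≤ n) :
    B.Vl n p ∈ B.G n := by
  rcases eq_or_lt_of_le h with h1 | h1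
  · rw [Vl_of_le h1.ge, ← h1]; exact mem_G_of_carrier hB hp
  · rw [Vl_of_lt h1]; exact hB.tr_mem p.1 n h _ (mem_G_of_carrier hB hp)

set_option linter.unusedSectionVars false in
lemma Vl_mem_H {n : K} {p : K × Λ × Bool} (hp : p ∈ B.carrier) (h : p.1 < n)
    (hn : n ∈ B.KI) : B.Vl n p ∈ B.H n := by
  rw [Vl_of_lt h]
  exact hB.g2_tr n hn p.1 h p.2.1 (mem_G_of_carrier hB hp)

lemma Vl_tr {n m : K} {p : K × Λ × Bool} (hp : p ∈ B.carrier) (h1 : p.1 ≤ n)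
    (h2 : n ≤ m) : B.Vl m p = B.tr n m (B.Vl n p) := by
  rcases eq_or_lt_of_le h1 with e1 | e1
  · rw [Vl_of_le e1.ge, ← e1]
    rcases eq_or_lt_of_le h2 with e2 | e2
    · rw [← e2, Vl_of_le e1.ge, ← e1, hB.tr_id _ _ (mem_G_of_carrier hB hp)]
    · rw [Vl_of_lt (e1 ▸ e2 : p.1 < m), e1]
  · rw [Vl_of_lt e1, Vl_of_lt (lt_of_lt_of_le e1 h2),
      hB.tr_comp p.1 n m e1.le h2 _ (mem_G_of_carrier hB hp)]

end Order

end BunchData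
namespace BunchData

section Order2

set_option linter.unusedSectionVars false

variable {K : Type u} {Λ : Type v} [LinearOrder K] {B : BunchData K Λ}

lemma glt_irrefl (p : K × Λ × Bool) : ¬ B.glt p p := by
  rw [glt_iff]
  rintro (h | ⟨e, h | h⟩)
  · exact h.2 rfl
  · rw [h.1] at h; exact absurd h.2 (by simp)
  · exact absurd h.2 (lt_irrefl _)

variable (hB : B.IsBunch)
include hB

lemma glt_asymm {p q : K × Λ × Bool} (hp : p ∈ B.carrier) (hq : q ∈ B.carrier)
    (h1 : B.glt p q) (h2 : B.glt q p) : False := by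
  rw [glt_iff] at h1 h2
  rw [max_comm q.1 p.1] at h2
  have hVp := Vl_mem hB hp (le_max_left p.1 q.1)
  have hVq := Vl_mem hB hq (le_max_right p.1 q.1)
  rcases h1 with h | ⟨e, h⟩ <;> rcases h2 with h' | ⟨e', h'⟩
  · exact (lt_trans' hB hVp hVq hVp h h').2 rfl
  · exact h.2 e'.symm
  · exact h'.2 e.symm
  · rcases h with h | h <;> rcases h' with h' | h'
    · rw [h.1] at h'; exact absurd h'.2 (by simp)
    · rw [h.1, h.2] at h'; exact absurd h'.1 (by simp)
    · rw [h'.1, h'.2] at h; exact absurd h.1 (by simp)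
    · exact absurd (h.2.trans h'.2) (lt_irrefl _)

lemma glt_total {p q : K × Λ × Bool} (hp : p ∈ B.carrier) (hq : q ∈ B.carrier) :
    B.glt p q ∨ p = q ∨ B.glt q p := by
  have hVp := Vl_mem hB hp (le_max_left p.1 q.1)
  have hVq := Vl_mem hB hq (le_max_right p.1 q.1)
  by_cases e : B.Vl (max p.1 q.1) p = B.Vl (max p.1 q.1) q
  · by_cases ed : B.Dl (max p.1 q.1) p = B.Dl (max p.1 q.1) q
    · rcases lt_trichotomy p.1 q.1 with hpq | hpq | hpq
      · exact Or.inl ((glt_iff p q).2 (Or.inr ⟨e, Or.inr ⟨ed, hpq⟩⟩))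
      · refine Or.inr (Or.inl ?_)
        have hw : max p.1 q.1 = p.1 := by rw [hpq, max_self]
        have e' : p.2.1 = q.2.1 := by
          rwa [Vl_of_le hw.le, Vl_of_le (hw.trans hpq).le] at e
        have ed' : p.2.2 = q.2.2 := by
          rwa [Dl_of_le hw.le, Dl_of_le (hw.trans hpq).le] at ed
        exact Prod.ext hpq (Prod.ext e' ed')
      · refine Or.inr (Or.inr ((glt_iff q p).2 ?_))
        rw [max_comm q.1 p.1]
        exact Or.inr ⟨e.symm, Or.inr ⟨ed.symm, hpq⟩⟩
    · cases hDp : B.Dl (max p.1 q.1) p <;> cases hDq : B.Dl (max p.1 q.1) q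
      · exact absurd (hDp.trans hDq.symm) ed
      · refine Or.inr (Or.inr ((glt_iff q p).2 ?_))
        rw [max_comm q.1 p.1]
        exact Or.inr ⟨e.symm, Or.inl ⟨hDq, hDp⟩⟩
      · exact Or.inl ((glt_iff p q).2 (Or.inr ⟨e, Or.inl ⟨hDp, hDq⟩⟩))
      · exact absurd (hDp.trans hDq.symm) ed
  · rcases hB.le_total' _ _ hVp _ hVq with h | h
    · exact Or.inl ((glt_iff p q).2 (Or.inl ⟨h, e⟩))
    · refine Or.inr (Or.inr ((glt_iff q p).2 ?_))
      rw [max_comm q.1 p.1]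
      exact Or.inl ⟨h, Ne.symm e⟩

lemma glt_le_lift {p q : K × Λ × Bool} {n : K} (hp : p ∈ B.carrier)
    (hq : q ∈ B.carrier) (hn : max p.1 q.1 ≤ n) (h : B.glt p q) :
    B.le n (B.Vl n p) (B.Vl n q) := by
  rw [glt_iff] at h
  rw [Vl_tr hB hp (le_max_left p.1 q.1) hn, Vl_tr hB hq (le_max_right p.1 q.1) hn]
  rcases h with h | ⟨e, _⟩
  · exact hB.tr_mono _ n hn _ (Vl_mem hB hp (le_max_left p.1 q.1)) _
      (Vl_mem hB hq (le_max_right p.1 q.1)) h.1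
  · rw [e]
    exact hB.le_refl' n _ (hB.tr_mem _ n hn _ (Vl_mem hB hq (le_max_right p.1 q.1)))

lemma glt_high_pat {p q r : K × Λ × Bool} (hp : p ∈ B.carrier) (hq : q ∈ B.carrier)
    (hr : r ∈ B.carrier) (ha : p.1 < q.1) (hc : r.1 < q.1)
    (h1 : B.glt p q) (h2 : B.glt q r) :
    B.lt q.1 (B.Vl q.1 p) (B.Vl q.1 r) := by
  rw [glt_iff, max_eq_right ha.le] at h1
  rw [glt_iff, max_eq_left hc.le] at h2
  rw [Dl_of_lt ha] at h1
  rw [Dl_of_lt hc] at h2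
  have hVp := Vl_mem hB hp ha.le
  have hVq := Vl_mem hB hq le_rfl
  have hVr := Vl_mem hB hr hc.le
  have h1' : B.lt q.1 (B.Vl q.1 p) (B.Vl q.1 q) ∨
      (B.Vl q.1 p = B.Vl q.1 q ∧ B.Dl q.1 q = false) := by
    rcases h1 with h | ⟨e, h | h⟩
    · exact Or.inl h
    · exact absurd h.1 (by simp)
    · exact Or.inr ⟨e, h.1.symm⟩
  have h2' : B.lt q.1 (B.Vl q.1 q) (B.Vl q.1 r) ∨
      (B.Vl q.1 q = B.Vl q.1 r ∧ B.Dl q.1 q = true) := by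
    rcases h2 with h | ⟨e, h | h⟩
    · exact Or.inl h
    · exact Or.inr ⟨e, h.1⟩
    · exact absurd h.2 (not_lt.2 hc.le)
  rcases h1' with h1' | ⟨e1, d1⟩ <;> rcases h2' with h2' | ⟨e2, d2⟩
  · exact lt_trans' hB hVp hVq hVr h1' h2'
  · exact e2 ▸ h1'
  · exact e1 ▸ h2'
  · rw [d1] at d2; exact absurd d2 (by simp)

lemma glt_trans {p q r : K × Λ × Bool} (hp : p ∈ B.carrier) (hq : q ∈ B.carrier)
    (hr : r ∈ B.carrier) (h1 : B.glt p q) (h2 : B.glt q r) : B.glt p r := by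
  have hVp := Vl_mem hB hp (le_max_left p.1 r.1)
  have hVr := Vl_mem hB hr (le_max_right p.1 r.1)
  by_cases e : B.Vl (max p.1 r.1) p = B.Vl (max p.1 r.1) r
  · -- value tie at level m
    rcases lt_trichotomy p.1 r.1 with hac | hac | hac
    · -- a < c : show r not dotted at top
      have hm : max p.1 r.1 = r.1 := max_eq_right hac.le
      have hDp : B.Dl (max p.1 r.1) p = false := Dl_of_lt (lt_of_lt_of_le hac (le_max_right p.1 r.1))
      have hDr : B.Dl (max p.1 r.1) r = false := by
        by_contra hd
        have hd : B.Dl (max p.1 r.1) r = true := by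
          cases h : B.Dl (max p.1 r.1) r; exact absurd h hd; rfl
        rw [hm, Dl_of_le le_rfl] at hd
        by_cases hbc : q.1 ≤ r.1
        · have h2' : B.lt r.1 (B.Vl r.1 q) (B.Vl r.1 r) := by
            rw [glt_iff, max_eq_right hbc] at h2
            rcases h2 with h | ⟨e2, h | h⟩
            · exact h
            · rw [Dl_of_le le_rfl, hd] at h; exact absurd h.2 (by simp)
            · exfalso
              have hq1 : B.Dl r.1 q = true := by rw [h.1, Dl_of_le le_rfl, hd]
              have : ¬ q.1 < r.1 := by
                intro hlt; rw [Dl_of_lt hlt] at hq1; exact absurd hq1 (by simp)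
              exact this h.2
          have h1' := glt_le_lift hB hp hq (max_le (hac.le) hbc) h1
          have := lt_of_le_of_lt' hB (Vl_mem hB hp hac.le) (Vl_mem hB hq hbc)
            (Vl_mem hB hr le_rfl) h1' h2'
          rw [hm] at e
          exact this.2 e
        · push_neg at hbc
          have hpat := glt_high_pat hB hp hq hr (hac.trans hbc) hbc h1 h2
          have e' : B.Vl q.1 p = B.Vl q.1 r := by
            rw [Vl_tr hB hp (le_max_left p.1 r.1) ((le_of_eq hm).trans hbc.le),
              Vl_tr hB hr (le_max_right p.1 r.1) ((le_of_eq hm).trans hbc.le), e]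
          exact hpat.2 e'
      exact (glt_iff p r).2 (Or.inr ⟨e, Or.inr ⟨hDp.trans hDr.symm, hac⟩⟩)
    · -- a = c
      have hm : max p.1 r.1 = p.1 := by rw [hac, max_self]
      have hzz : p.2.1 = r.2.1 := by
        have := e; rwa [Vl_of_le hm.le, Vl_of_le (hm.le.trans hac.le)] at this
      have hne : p ≠ r := by
        rintro rfl; exact glt_asymm hB hp hq h1 h2
      have hdd : p.2.2 ≠ r.2.2 := by
        intro hd; exact hne (Prod.ext hac (Prod.ext hzz hd))
      have hgoal : p.2.2 = true ∧ r.2.2 = false := by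
        by_contra hcon
        have hpd : p.2.2 = false := by
          cases hP : p.2.2
          · rfl
          · cases hR : r.2.2
            · exact absurd ⟨hP, hR⟩ hcon
            · exact absurd (hP.trans hR.symm) hdd
        have hrd : r.2.2 = true := by
          cases hR : r.2.2
          · exact absurd (hpd.trans hR.symm) hdd
          · rfl
        by_cases hb : q.1 ≤ p.1
        · have h1' : B.lt p.1 (B.Vl p.1 p) (B.Vl p.1 q) := by
            rw [glt_iff, max_eq_left hb] at h1
            rcases h1 with h | ⟨e1, h | h⟩
            · exact h
            · rw [Dl_of_le le_rfl, hpd] at h; exact absurd h.1 (by simp)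
            · exact absurd h.2 (not_lt.2 hb)
          have h2' : B.lt p.1 (B.Vl p.1 q) (B.Vl p.1 r) := by
            rw [glt_iff, max_eq_right (hac ▸ hb : q.1 ≤ r.1)] at h2
            rcases h2 with h | ⟨e2, h | h⟩
            · exact hac ▸ h
            · rw [Dl_of_le le_rfl, hrd] at h; exact absurd h.2 (by simp)
            · exfalso
              have : B.Dl r.1 q = true := by rw [h.1, Dl_of_le le_rfl, hrd]
              have hq1 : ¬ q.1 < r.1 := by
                intro hlt; rw [Dl_of_lt hlt] at this; exact absurd this (by simp)
              exact hq1 h.2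
          have := lt_trans' hB (Vl_mem hB hp le_rfl) (Vl_mem hB hq hb)
            (Vl_mem hB hr hac.ge) h1' h2'
          rw [hm] at e
          exact this.2 e
        · push_neg at hb
          have hpat := glt_high_pat hB hp hq hr hb (hac ▸ hb) h1 h2
          have e' : B.Vl q.1 p = B.Vl q.1 r := by
            rw [Vl_tr hB hp (le_max_left p.1 r.1) ((le_of_eq hm).trans hb.le),
              Vl_tr hB hr (le_max_right p.1 r.1) ((le_of_eq hm).trans hb.le), e]
          exact hpat.2 e'
      refine (glt_iff p r).2 (Or.inr ⟨e, Or.inl ⟨?_, ?_⟩⟩)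
      · rw [hm, Dl_of_le le_rfl]; exact hgoal.1
      · rw [hm, hac, Dl_of_le le_rfl]; exact hgoal.2
    · -- c < a
      have hm : max p.1 r.1 = p.1 := max_eq_left hac.le
      have hDr : B.Dl (max p.1 r.1) r = false := Dl_of_lt (lt_of_lt_of_le hac (le_max_left p.1 r.1))
      have hDp : B.Dl (max p.1 r.1) p = true := by
        by_contra hd
        have hpd : p.2.2 = false := by
          rw [hm, Dl_of_le le_rfl] at hd
          cases h : p.2.2; rfl; exact absurd h hd
        by_cases hb : q.1 ≤ p.1
        · have h1' : B.lt p.1 (B.Vl p.1 p) (B.Vl p.1 q) := by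
            rw [glt_iff, max_eq_left hb] at h1
            rcases h1 with h | ⟨e1, h | h⟩
            · exact h
            · rw [Dl_of_le le_rfl, hpd] at h; exact absurd h.1 (by simp)
            · exact absurd h.2 (not_lt.2 hb)
          have h2' := glt_le_lift hB hq hr (max_le hb hac.le) h2
          have := lt_of_lt_of_le' hB (Vl_mem hB hp le_rfl) (Vl_mem hB hq hb)
            (Vl_mem hB hr hac.le) h1' h2'
          rw [hm] at e
          exact this.2 e
        · push_neg at hb
          have hpat := glt_high_pat hB hp hq hr hb (hac.trans hb) h1 h2
          have e' : B.Vl q.1 p = B.Vl q.1 r := by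
            rw [Vl_tr hB hp (le_max_left p.1 r.1) ((le_of_eq hm).trans hb.le),
              Vl_tr hB hr (le_max_right p.1 r.1) ((le_of_eq hm).trans hb.le), e]
          exact hpat.2 e'
      exact (glt_iff p r).2 (Or.inr ⟨e, Or.inl ⟨hDp, hDr⟩⟩)
  · -- values differ at m: strict either way
    rcases hB.le_total' _ _ hVp _ hVr with h | h
    · exact (glt_iff p r).2 (Or.inl ⟨h, e⟩)
    · exfalso
      by_cases hb : q.1 ≤ max p.1 r.1
      · have h1' := glt_le_lift hB hp hq (max_le (le_max_left p.1 r.1) hb) h1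
        have h2' := glt_le_lift hB hq hr (max_le hb (le_max_right p.1 r.1)) h2
        have hVq := Vl_mem hB hq hb
        exact e (hB.le_antisymm' _ _ hVp _ hVr
          (hB.le_trans' _ _ hVp _ hVq _ hVr h1' h2') h)
      · push_neg at hb
        have hpat := glt_high_pat hB hp hq hr
          (lt_of_le_of_lt (le_max_left p.1 r.1) hb)
          (lt_of_le_of_lt (le_max_right p.1 r.1) hb) h1 h2
        have h' : B.le q.1 (B.Vl q.1 r) (B.Vl q.1 p) := by
          rw [Vl_tr hB hp (le_max_left p.1 r.1) hb.le,
            Vl_tr hB hr (le_max_right p.1 r.1) hb.le]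
          exact hB.tr_mono _ _ hb.le _ hVr _ hVp h
        exact hpat.2 (hB.le_antisymm' _ _
          (Vl_mem hB hp ((le_max_left p.1 r.1).trans hb.le)) _
          (Vl_mem hB hr ((le_max_right p.1 r.1).trans hb.le))
          hpat.1 h')

lemma gle_refl (p : K × Λ × Bool) : B.gle p p := Or.inr rfl

lemma gle_trans {p q r : K × Λ × Bool} (hp : p ∈ B.carrier) (hq : q ∈ B.carrier)
    (hr : r ∈ B.carrier) (h1 : B.gle p q) (h2 : B.gle q r) : B.gle p r := by
  rcases h1 with h1 | rfl
  · rcases h2 with h2 | rfl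
    · exact Or.inl (glt_trans hB hp hq hr h1 h2)
    · exact Or.inl h1
  · exact h2

lemma gle_antisymm {p q : K × Λ × Bool} (hp : p ∈ B.carrier) (hq : q ∈ B.carrier)
    (h1 : B.gle p q) (h2 : B.gle q p) : p = q := by
  rcases h1 with h1 | rfl
  · rcases h2 with h2 | rfl
    · exact absurd (glt_asymm hB hp hq h1 h2) id
    · rfl
  · rfl

lemma gle_total' {p q : K × Λ × Bool} (hp : p ∈ B.carrier) (hq : q ∈ B.carrier) :
    B.gle p q ∨ B.gle q p := by
  rcases glt_total hB hp hq with h | h | h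
  · exact Or.inl (Or.inl h)
  · exact Or.inl (Or.inr h)
  · exact Or.inr (Or.inl h)

lemma glt_iff_gle_ne {p q : K × Λ × Bool} (hp : p ∈ B.carrier) (hq : q ∈ B.carrier) :
    B.glt p q ↔ B.gle p q ∧ p ≠ q := by
  constructor
  · intro h
    refine ⟨Or.inl h, fun e => ?_⟩
    exact glt_irrefl _ (e ▸ h)
  · rintro ⟨h | rfl, hne⟩
    · exact h
    · exact absurd rfl hne

lemma not_glt_iff {p q : K × Λ × Bool} (hp : p ∈ B.carrier) (hq : q ∈ B.carrier) :
    ¬ B.glt p q ↔ B.gle q p := by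
  constructor
  · intro h
    rcases glt_total hB hp hq with h1 | rfl | h1
    · exact absurd h1 h
    · exact Or.inr rfl
    · exact Or.inl h1
  · rintro (h | rfl) h2
    · exact glt_asymm hB hp hq h2 h
    · exact glt_irrefl _ h2

end Order2

end BunchData
namespace BunchData

section Mul

set_option linter.unusedSectionVars false

variable {K : Type u} {Λ : Type v} [LinearOrder K] {B : BunchData K Λ}

/-- `p` is an undotted element of `H n` at level `n`. -/
def UHl (B : BunchData K Λ) (n : K) (p : K × Λ × Bool) : Prop :=
  B.Vl n p ∈ B.H n ∧ B.Dl n p = false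

lemma gmulB_fst (p q : K × Λ × Bool) : (B.gmulB p q).1 = max p.1 q.1 := by
  show (B.star _ _ _).1 = _
  rw [star]; split <;> rfl

lemma gmulB_val (p q : K × Λ × Bool) :
    (B.gmulB p q).2.1 =
      B.mul (max p.1 q.1) (B.Vl (max p.1 q.1) p) (B.Vl (max p.1 q.1) q) := by
  show (B.star _ _ _).2.1 = _
  rw [star]; split <;> rfl

lemma gmulB_dot_iff (p q : K × Λ × Bool) : (B.gmulB p q).2.2 = true ↔
    (max p.1 q.1 ∈ B.KI ∧
     B.mul (max p.1 q.1) (B.Vl (max p.1 q.1) p) (B.Vl (max p.1 q.1) q) ∈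
       B.H (max p.1 q.1) ∧
     ¬(B.UHl (max p.1 q.1) p ∧ B.UHl (max p.1 q.1) q)) := by
  show (B.star _ _ _).2.2 = true ↔ _
  rw [star]
  split
  · rename_i h
    exact iff_of_true rfl ⟨h.1, h.2.1, fun hc => h.2.2 ⟨hc.1.1, hc.1.2, hc.2.1, hc.2.2⟩⟩
  · rename_i h
    exact iff_of_false (by simp)
      (fun hc => h ⟨hc.1, hc.2.1, fun hu => hc.2.2 ⟨⟨hu.1, hu.2.1⟩, hu.2.2.1, hu.2.2.2⟩⟩)

lemma bool_eq_of_iff {x y : Bool} (h : x = true ↔ y = true) : x = y := by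
  cases x <;> cases y <;> simp_all

variable (hB : B.IsBunch)
include hB

lemma Vl_gmulB {p q : K × Λ × Bool} {n : K} (hp : p ∈ B.carrier) (hq : q ∈ B.carrier)
    (hn : max p.1 q.1 ≤ n) :
    B.Vl n (B.gmulB p q) = B.mul n (B.Vl n p) (B.Vl n q) := by
  rcases eq_or_lt_of_le hn with e | e
  · rw [Vl_of_le (by rw [gmulB_fst, e] : n ≤ (B.gmulB p q).1), gmulB_val, ← e]
  · rw [Vl_of_lt (by rw [gmulB_fst]; exact e : (B.gmulB p q).1 < n), gmulB_fst,
      gmulB_val, hB.tr_mul _ n hn _ (Vl_mem hB hp (le_max_left _ _)) _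
        (Vl_mem hB hq (le_max_right _ _)),
      ← Vl_tr hB hp (le_max_left _ _) hn, ← Vl_tr hB hq (le_max_right _ _) hn]

omit hB in
lemma Dl_gmulB_of_lt {p q : K × Λ × Bool} {n : K} (h : max p.1 q.1 < n) :
    B.Dl n (B.gmulB p q) = false :=
  Dl_of_lt (by rw [gmulB_fst]; exact h)

omit hB in
lemma Dl_gmulB_self (p q : K × Λ × Bool) :
    B.Dl (max p.1 q.1) (B.gmulB p q) = (B.gmulB p q).2.2 :=
  Dl_of_le (le_of_eq (gmulB_fst p q).symm)

lemma gmulB_mem {p q : K × Λ × Bool} (hp : p ∈ B.carrier) (hq : q ∈ B.carrier) :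
    B.gmulB p q ∈ B.carrier := by
  cases hd : (B.gmulB p q).2.2
  · refine Or.inl ⟨hd, ?_⟩
    have := gmulB_val (B := B) p q
    rw [gmulB_fst (B := B) p q] at *
    rw [this]
    exact hB.mul_mem _ _ (Vl_mem hB hp (le_max_left _ _)) _
      (Vl_mem hB hq (le_max_right _ _))
  · have h := (gmulB_dot_iff p q).1 hd
    refine Or.inr ⟨hd, ?_, ?_⟩
    · rw [gmulB_fst]; exact h.1
    · rw [gmulB_fst, gmulB_val]; exact h.2.1

lemma UHl_gmulB {p q : K × Λ × Bool} {n : K} (hp : p ∈ B.carrier) (hq : q ∈ B.carrier)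
    (hn : n ∈ B.KI) (h : max p.1 q.1 ≤ n) :
    B.UHl n (B.gmulB p q) ↔
      (B.mul n (B.Vl n p) (B.Vl n q) ∈ B.H n ∧ B.UHl n p ∧ B.UHl n q) := by
  rcases eq_or_lt_of_le h with e | e
  · subst e
    unfold UHl
    rw [Vl_gmulB hB hp hq le_rfl, Dl_gmulB_self]
    constructor
    · rintro ⟨h1, h2⟩
      have hnd : ¬ (B.gmulB p q).2.2 = true := by rw [h2]; simp
      rw [gmulB_dot_iff] at hnd
      push_neg at hnd
      have h3 := hnd hn h1
      rcases h3 with ⟨h4, h5⟩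
      exact ⟨h1, h4, h5⟩
    · rintro ⟨h1, h2, h3⟩
      refine ⟨h1, ?_⟩
      cases hd : (B.gmulB p q).2.2
      · rfl
      · exfalso
        have := (gmulB_dot_iff p q).1 hd
        exact this.2.2 ⟨h2, h3⟩
  · have h1 : B.UHl n p := ⟨Vl_mem_H hB hp (lt_of_le_of_lt (le_max_left _ _) e) hn,
      Dl_of_lt (lt_of_le_of_lt (le_max_left _ _) e)⟩
    have h2 : B.UHl n q := ⟨Vl_mem_H hB hq (lt_of_le_of_lt (le_max_right _ _) e) hn,
      Dl_of_lt (lt_of_le_of_lt (le_max_right _ _) e)⟩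
    unfold UHl
    rw [Vl_gmulB hB hp hq h, Dl_gmulB_of_lt (B := B) e]
    constructor
    · rintro ⟨hm, _⟩; exact ⟨hm, h1, h2⟩
    · rintro ⟨hm, _⟩; exact ⟨hm, rfl⟩

lemma gmulB_comm {p q : K × Λ × Bool} (hp : p ∈ B.carrier) (hq : q ∈ B.carrier) :
    B.gmulB p q = B.gmulB q p := by
  have hmax : max q.1 p.1 = max p.1 q.1 := max_comm _ _
  have hmul : B.mul (max p.1 q.1) (B.Vl (max p.1 q.1) q) (B.Vl (max p.1 q.1) p) =
      B.mul (max p.1 q.1) (B.Vl (max p.1 q.1) p) (B.Vl (max p.1 q.1) q) :=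
    hB.mul_comm' _ _ (Vl_mem hB hq (le_max_right _ _)) _ (Vl_mem hB hp (le_max_left _ _))
  refine Prod.ext ?_ (Prod.ext ?_ ?_)
  · rw [gmulB_fst, gmulB_fst, hmax]
  · rw [gmulB_val, gmulB_val, hmax, hmul]
  · apply bool_eq_of_iff
    rw [gmulB_dot_iff, gmulB_dot_iff, hmax, hmul]
    tauto

lemma tB_mem : B.tB ∈ B.carrier := Or.inl ⟨rfl, hB.unit_mem B.t⟩

lemma Vl_tB {n : K} : B.Vl n B.tB = B.unit n := by
  rcases eq_or_lt_of_le (hB.t_least n) with e | e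
  · rw [Vl_of_le (le_of_eq e.symm : n ≤ B.tB.1), ← e]; rfl
  · rw [Vl_of_lt (e : B.tB.1 < n)]
    exact hB.tr_unit B.t n (hB.t_least n)

omit hB in
lemma Dl_tB {n : K} : B.Dl n B.tB = false := by
  rcases le_or_gt n B.tB.1 with h | h
  · rw [Dl_of_le h]; rfl
  · rw [Dl_of_lt h]

lemma gmulB_tB {p : K × Λ × Bool} (hp : p ∈ B.carrier) : B.gmulB p B.tB = p := by
  have hm : max p.1 B.tB.1 = p.1 := max_eq_left (hB.t_least p.1)
  have hz := mem_G_of_carrier hB hp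
  have hval : B.mul p.1 (B.Vl p.1 p) (B.Vl p.1 B.tB) = p.2.1 := by
    rw [Vl_tB hB, Vl_of_le le_rfl]
    exact hB.mul_unit' p.1 _ hz
  refine Prod.ext ?_ (Prod.ext ?_ ?_)
  · rw [gmulB_fst, hm]
  · rw [gmulB_val, hm, hval]
  · apply bool_eq_of_iff
    rw [gmulB_dot_iff, hm, hval]
    constructor
    · rintro ⟨h1, h2, h3⟩
      by_contra hd
      have hd : p.2.2 = false := by cases hpd : p.2.2; rfl; exact absurd hpd hd
      exact h3 ⟨⟨by rwa [Vl_of_le le_rfl], by rwa [Dl_of_le le_rfl]⟩,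
        ⟨by rw [Vl_tB hB]; exact (hB.g2_sub p.1 h1).2.1, Dl_tB (B := B)⟩⟩
    · intro hd
      have := dotted_KI (B := B) hp hd
      refine ⟨this.1, this.2, fun hc => ?_⟩
      obtain ⟨⟨_, h5⟩, _⟩ := hc
      rw [Dl_of_le le_rfl] at h5
      rw [h5] at hd
      exact absurd hd (by simp)

lemma gmulB_assoc {p q r : K × Λ × Bool} (hp : p ∈ B.carrier) (hq : q ∈ B.carrier)
    (hr : r ∈ B.carrier) : B.gmulB (B.gmulB p q) r = B.gmulB p (B.gmulB q r) := by
  have hpq := gmulB_mem hB hp hq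
  have hqr := gmulB_mem hB hq hr
  have h1 : max (B.gmulB p q).1 r.1 = max (max p.1 q.1) r.1 := by rw [gmulB_fst]
  have h2 : max p.1 (B.gmulB q r).1 = max (max p.1 q.1) r.1 := by
    rw [gmulB_fst, max_assoc]
  set W := max (max p.1 q.1) r.1 with hW
  have hpW : p.1 ≤ W := le_max_of_le_left (le_max_left _ _)
  have hqW : q.1 ≤ W := le_max_of_le_left (le_max_right _ _)
  have hrW : r.1 ≤ W := le_max_right _ _
  have hpqW : max p.1 q.1 ≤ W := le_max_left _ _
  have hqrW : max q.1 r.1 ≤ W := max_le hqW hrW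
  have hVp := Vl_mem hB hp hpW
  have hVq := Vl_mem hB hq hqW
  have hVr := Vl_mem hB hr hrW
  have hvpq : B.Vl W (B.gmulB p q) = B.mul W (B.Vl W p) (B.Vl W q) :=
    Vl_gmulB hB hp hq hpqW
  have hvqr : B.Vl W (B.gmulB q r) = B.mul W (B.Vl W q) (B.Vl W r) :=
    Vl_gmulB hB hq hr hqrW
  have hvL : B.mul W (B.Vl W (B.gmulB p q)) (B.Vl W r) =
      B.mul W (B.Vl W p) (B.mul W (B.Vl W q) (B.Vl W r)) := by
    rw [hvpq]; exact hB.mul_assoc' W _ hVp _ hVq _ hVr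
  have hvR : B.mul W (B.Vl W p) (B.Vl W (B.gmulB q r)) =
      B.mul W (B.Vl W p) (B.mul W (B.Vl W q) (B.Vl W r)) := by rw [hvqr]
  refine Prod.ext ?_ (Prod.ext ?_ ?_)
  · simp only [gmulB_fst]
    exact max_assoc _ _ _
  · simp only [gmulB_val, gmulB_fst, ← max_assoc]
    rw [hvL, hvR]
  · apply bool_eq_of_iff
    simp only [gmulB_dot_iff, gmulB_fst, ← max_assoc]
    rw [hvL, hvR]
    by_cases hKI : W ∈ B.KI
    · rw [UHl_gmulB hB hp hq hKI hpqW, UHl_gmulB hB hq hr hKI hqrW]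
      have hcl1 : B.UHl W p → B.UHl W q → B.mul W (B.Vl W p) (B.Vl W q) ∈ B.H W :=
        fun a b => (hB.g2_sub W hKI).2.2.1 _ a.1 _ b.1
      have hcl2 : B.UHl W q → B.UHl W r → B.mul W (B.Vl W q) (B.Vl W r) ∈ B.H W :=
        fun a b => (hB.g2_sub W hKI).2.2.1 _ a.1 _ b.1
      tauto
    · tauto

end Mul

end BunchData
namespace BunchData

section Neg

set_option linter.unusedSectionVars false

variable {K : Type u} {Λ : Type v} [LinearOrder K] {B : BunchData K Λ}

/-- the lower cover of the unit in layer `u` -/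
noncomputable def dJ (B : BunchData K Λ) (u : K) : Λ := B.lowerCoverFn u (B.unit u)

variable (hB : B.IsBunch)
include hB

lemma mul_inv_cancel_left {u : K} {x y : Λ} (hx : x ∈ B.G u) (hy : y ∈ B.G u) :
    B.mul u x (B.mul u (B.inv u x) y) = y := by
  have hix := hB.inv_mem u x hx
  rw [← hB.mul_assoc' u x hx _ hix y hy, hB.mul_inv' u x hx, unit_mul hB hy]

lemma mil {u : K} {x y : Λ} (hx : x ∈ B.G u) (hy : y ∈ B.G u) :
    B.mul u (B.mul u (B.inv u x) (B.inv u y)) x = B.inv u y := by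
  have hix := hB.inv_mem u x hx
  have hiy := hB.inv_mem u y hy
  have hm := hB.mul_mem u _ hix _ hiy
  rw [hB.mul_comm' u _ hm x hx, ← hB.mul_assoc' u x hx _ hix _ hiy,
    hB.mul_inv' u x hx, unit_mul hB hiy]

lemma inv_lt_inv_iff {u : K} {x y : Λ} (hx : x ∈ B.G u) (hy : y ∈ B.G u) :
    B.lt u (B.inv u y) (B.inv u x) ↔ B.lt u x y := by
  have hix := hB.inv_mem u x hx
  have hiy := hB.inv_mem u y hy
  have hz := hB.mul_mem u _ hix _ hiy
  have e1 : B.mul u (B.mul u (B.inv u x) (B.inv u y)) x = B.inv u y := mil hB hx hy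
  have e2 : B.mul u (B.mul u (B.inv u x) (B.inv u y)) y = B.inv u x := by
    rw [hB.mul_comm' u _ hix _ hiy]; exact mil hB hy hx
  have h := mul_lt_mul_iff hB hx hy hz
  rw [e1, e2] at h
  exact h

lemma inv_le_inv_iff {u : K} {x y : Λ} (hx : x ∈ B.G u) (hy : y ∈ B.G u) :
    B.le u (B.inv u y) (B.inv u x) ↔ B.le u x y := by
  have hix := hB.inv_mem u x hx
  have hiy := hB.inv_mem u y hy
  have hz := hB.mul_mem u _ hix _ hiy
  have e1 : B.mul u (B.mul u (B.inv u x) (B.inv u y)) x = B.inv u y := mil hB hx hy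
  have e2 : B.mul u (B.mul u (B.inv u x) (B.inv u y)) y = B.inv u x := by
    rw [hB.mul_comm' u _ hix _ hiy]; exact mil hB hy hx
  have h := mul_le_mul_iff hB hx hy hz
  rw [e1, e2] at h
  exact h

lemma inv_inj {u : K} {x y : Λ} (hx : x ∈ B.G u) (hy : y ∈ B.G u)
    (h : B.inv u x = B.inv u y) : x = y := by
  rw [← inv_inv hB hx, h, inv_inv hB hy]

/-- the chosen lower cover function gives a lower cover -/
lemma lowerCoverFn_spec {u : K} (hu : u ∈ B.KJ) {x : Λ} (hx : x ∈ B.G u) :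
    B.IsLowerCoverIn u (B.lowerCoverFn u x) x :=
  Classical.epsilon_spec (hB.g3_disc u hu x hx).1

lemma lc_unique {u : K} {x p p' : Λ} (h1 : B.IsLowerCoverIn u p x)
    (h2 : B.IsLowerCoverIn u p' x) : p = p' :=
  hB.le_antisymm' u p h1.1 p' h2.1 (h2.2.2 p h1.1 h1.2.1) (h1.2.2 p' h2.1 h2.2.1)

lemma dJ_spec {u : K} (hu : u ∈ B.KJ) : B.IsLowerCoverIn u (B.dJ u) (B.unit u) :=
  lowerCoverFn_spec hB hu (hB.unit_mem u)

lemma dJ_mem {u : K} (hu : u ∈ B.KJ) : B.dJ u ∈ B.G u := (dJ_spec hB hu).1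

lemma dJ_lt_unit {u : K} (hu : u ∈ B.KJ) : B.lt u (B.dJ u) (B.unit u) :=
  (dJ_spec hB hu).2.1

lemma isLC_mul {u : K} (hu : u ∈ B.KJ) {x : Λ} (hx : x ∈ B.G u) :
    B.IsLowerCoverIn u (B.mul u x (B.dJ u)) x := by
  have hd := dJ_mem hB hu
  have hxd := hB.mul_mem u x hx _ hd
  refine ⟨hxd, ?_, ?_⟩
  · have := mul_lt_mul' hB hd (hB.unit_mem u) hx (dJ_lt_unit hB hu)
    rwa [hB.mul_unit' u x hx] at this
  · intro z hz hzx
    have hix := hB.inv_mem u x hx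
    have h1 : B.lt u (B.mul u (B.inv u x) z) (B.unit u) := by
      have := mul_lt_mul' hB hz hx hix hzx
      rwa [hB.mul_comm' u _ hix x hx, hB.mul_inv' u x hx] at this
    have h2 := (dJ_spec hB hu).2.2 _ (hB.mul_mem u _ hix z hz) h1
    have h3 := hB.mul_le_mul' u _ (hB.mul_mem u _ hix z hz) _ hd x hx h2
    rwa [mul_inv_cancel_left hB hx hz] at h3

lemma lowerCoverFn_eq {u : K} (hu : u ∈ B.KJ) {x : Λ} (hx : x ∈ B.G u) :
    B.lowerCoverFn u x = B.mul u x (B.dJ u) :=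
  lc_unique hB (lowerCoverFn_spec hB hu hx) (isLC_mul hB hu hx)

/-- discrete shift: `x ≤ y·d ↔ x < y` -/
lemma le_mul_dJ_iff {u : K} (hu : u ∈ B.KJ) {x y : Λ} (hx : x ∈ B.G u)
    (hy : y ∈ B.G u) : B.le u x (B.mul u y (B.dJ u)) ↔ B.lt u x y := by
  have hlc := isLC_mul hB hu hy
  constructor
  · intro h
    exact lt_of_le_of_lt' hB hx hlc.1 hy h hlc.2.1
  · intro h
    exact hlc.2.2 x hx h

/-- discrete shift: `x·d < y ↔ x ≤ y` -/
lemma mul_dJ_lt_iff {u : K} (hu : u ∈ B.KJ) {x y : Λ} (hx : x ∈ B.G u)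
    (hy : y ∈ B.G u) : B.lt u (B.mul u x (B.dJ u)) y ↔ B.le u x y := by
  have hxd := hB.mul_mem u x hx _ (dJ_mem hB hu)
  constructor
  · intro h
    by_contra hc
    rw [not_le_iff hB hx hy] at hc
    have h2 := (le_mul_dJ_iff hB hu hy hx).2 hc
    exact ((not_le_iff hB hy hxd).2 h) h2
  · intro h
    rw [← not_le_iff hB hy hxd]
    intro hc
    have h2 := (le_mul_dJ_iff hB hu hy hx).1 hc
    exact h2.2 (hB.le_antisymm' u y hy x hx h2.1 h)

lemma tr_dJ {u v : K} (hu : u ∈ B.KJ) (huv : u < v) :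
    B.tr u v (B.dJ u) = B.unit v := by
  rw [← hB.g3_tr u hu v huv _ (dJ_spec hB hu), hB.tr_unit u v huv.le]

end Neg

end BunchData
namespace BunchData

section NegB

set_option linter.unusedSectionVars false

variable {K : Type u} {Λ : Type v} [LinearOrder K] {B : BunchData K Λ}

lemma negB_case1 {p : K × Λ × Bool} (h1 : p.1 ∈ B.KI) (h2 : p.2.2 = true) :
    B.negB p = (p.1, B.inv p.1 p.2.1, false) := by
  unfold negB; rw [if_pos ⟨h1, h2⟩]

lemma negB_case2 {p : K × Λ × Bool} (h1 : p.1 ∈ B.KI) (h2 : p.2.2 = false)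
    (h3 : p.2.1 ∈ B.H p.1) : B.negB p = (p.1, B.inv p.1 p.2.1, true) := by
  unfold negB
  rw [if_neg (fun hc => by rw [h2] at hc; exact absurd hc.2 (by simp)), if_pos ⟨h1, h3⟩]

lemma negB_case3 {p : K × Λ × Bool} (h1 : p.1 ∈ B.KJ) (hnI : p.1 ∉ B.KI) :
    B.negB p = (p.1, B.lowerCoverFn p.1 (B.inv p.1 p.2.1), false) := by
  unfold negB
  rw [if_neg (fun hc => hnI hc.1), if_neg (fun hc => hnI hc.1), if_pos h1]

lemma negB_case4 {p : K × Λ × Bool} (h1 : ¬(p.1 ∈ B.KI ∧ p.2.2 = true))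
    (h2 : ¬(p.1 ∈ B.KI ∧ p.2.1 ∈ B.H p.1)) (h3 : p.1 ∉ B.KJ) :
    B.negB p = (p.1, B.inv p.1 p.2.1, false) := by
  unfold negB
  rw [if_neg h1, if_neg h2, if_neg h3]

lemma negB_fst (p : K × Λ × Bool) : (B.negB p).1 = p.1 := by
  unfold negB; split_ifs <;> rfl

variable (hB : B.IsBunch)
include hB

lemma negB_mem {p : K × Λ × Bool} (hp : p ∈ B.carrier) : B.negB p ∈ B.carrier := by
  have hz := mem_G_of_carrier hB hp
  by_cases c1 : p.1 ∈ B.KI ∧ p.2.2 = true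
  · rw [negB_case1 c1.1 c1.2]
    exact Or.inl ⟨rfl, hB.inv_mem _ _ hz⟩
  · by_cases c2 : p.1 ∈ B.KI ∧ p.2.1 ∈ B.H p.1
    · have h2 : p.2.2 = false := by
        cases hd : p.2.2
        · rfl
        · exact absurd ⟨c2.1, hd⟩ c1
      rw [negB_case2 c2.1 h2 c2.2]
      exact Or.inr ⟨rfl, c2.1, (hB.g2_sub _ c2.1).2.2.2 _ c2.2⟩
    · by_cases c3 : p.1 ∈ B.KJ
      · have hnI : p.1 ∉ B.KI := fun hI => hB.disjJI p.1 ⟨c3, hI⟩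
        rw [negB_case3 c3 hnI]
        exact Or.inl ⟨rfl, (lowerCoverFn_spec hB c3 (hB.inv_mem _ _ hz)).1⟩
      · rw [negB_case4 c1 c2 c3]
        exact Or.inl ⟨rfl, hB.inv_mem _ _ hz⟩

lemma tr_negB_val {p : K × Λ × Bool} {n : K} (hp : p ∈ B.carrier) (h : p.1 < n) :
    B.tr p.1 n (B.negB p).2.1 = B.inv n (B.tr p.1 n p.2.1) := by
  have hz := mem_G_of_carrier hB hp
  have hiz := hB.inv_mem _ _ hz
  by_cases c1 : p.1 ∈ B.KI ∧ p.2.2 = true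
  · rw [negB_case1 c1.1 c1.2]; exact tr_inv hB h.le hz
  · by_cases c2 : p.1 ∈ B.KI ∧ p.2.1 ∈ B.H p.1
    · have h2 : p.2.2 = false := by
        cases hd : p.2.2
        · rfl
        · exact absurd ⟨c2.1, hd⟩ c1
      rw [negB_case2 c2.1 h2 c2.2]; exact tr_inv hB h.le hz
    · by_cases c3 : p.1 ∈ B.KJ
      · have hnI : p.1 ∉ B.KI := fun hI => hB.disjJI p.1 ⟨c3, hI⟩
        rw [negB_case3 c3 hnI]
        show B.tr p.1 n (B.lowerCoverFn p.1 (B.inv p.1 p.2.1)) = _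
        rw [lowerCoverFn_eq hB c3 hiz,
          hB.tr_mul p.1 n h.le _ hiz _ (dJ_mem hB c3), tr_dJ hB c3 h,
          hB.mul_unit' n _ (hB.tr_mem p.1 n h.le _ hiz)]
        exact tr_inv hB h.le hz
      · rw [negB_case4 c1 c2 c3]; exact tr_inv hB h.le hz

lemma Vl_negB_high {p : K × Λ × Bool} {n : K} (hp : p ∈ B.carrier) (h : p.1 < n) :
    B.Vl n (B.negB p) = B.inv n (B.Vl n p) := by
  rw [Vl_of_lt (by rw [negB_fst]; exact h : (B.negB p).1 < n), negB_fst,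
    tr_negB_val hB hp h, Vl_of_lt h]

omit hB in
lemma Dl_negB_high {p : K × Λ × Bool} {n : K} (h : p.1 < n) :
    B.Dl n (B.negB p) = false :=
  Dl_of_lt (by rw [negB_fst]; exact h)

lemma negB_negB {p : K × Λ × Bool} (hp : p ∈ B.carrier) : B.negB (B.negB p) = p := by
  have hz := mem_G_of_carrier hB hp
  have hiz := hB.inv_mem _ _ hz
  by_cases c1 : p.1 ∈ B.KI ∧ p.2.2 = true
  · rw [negB_case1 c1.1 c1.2]
    have hzH := (dotted_KI (B := B) hp c1.2).2
    rw [negB_case2 (p := (p.1, B.inv p.1 p.2.1, false)) c1.1 rfl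
      ((hB.g2_sub _ c1.1).2.2.2 _ hzH)]
    exact Prod.ext rfl (Prod.ext (inv_inv hB hz) c1.2.symm)
  · by_cases c2 : p.1 ∈ B.KI ∧ p.2.1 ∈ B.H p.1
    · have h2 : p.2.2 = false := by
        cases hd : p.2.2
        · rfl
        · exact absurd ⟨c2.1, hd⟩ c1
      rw [negB_case2 c2.1 h2 c2.2]
      rw [negB_case1 (p := (p.1, B.inv p.1 p.2.1, true)) c2.1 rfl]
      exact Prod.ext rfl (Prod.ext (inv_inv hB hz) h2.symm)
    · by_cases c3 : p.1 ∈ B.KJ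
      · have hnI : p.1 ∉ B.KI := fun hI => hB.disjJI p.1 ⟨c3, hI⟩
        have hd := dJ_mem hB c3
        have hid := hB.inv_mem _ _ hd
        have h2 : p.2.2 = false := by
          cases hd : p.2.2
          · rfl
          · exact absurd (dotted_KI (B := B) hp hd).1 hnI
        rw [negB_case3 c3 hnI]
        rw [negB_case3 (p := (p.1, B.lowerCoverFn p.1 (B.inv p.1 p.2.1), false)) c3 hnI]
        refine Prod.ext rfl (Prod.ext ?_ h2.symm)
        show B.lowerCoverFn p.1 (B.inv p.1 (B.lowerCoverFn p.1 (B.inv p.1 p.2.1))) = _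
        rw [lowerCoverFn_eq hB c3 hiz, inv_mul hB hiz hd, inv_inv hB hz,
          lowerCoverFn_eq hB c3 (hB.mul_mem _ _ hz _ hid),
          hB.mul_assoc' _ _ hz _ hid _ hd, hB.mul_comm' _ _ hid _ hd,
          hB.mul_inv' _ _ hd, hB.mul_unit' _ _ hz]
      · have h2 : p.2.2 = false := by
          cases hd : p.2.2
          · rfl
          · exact absurd ⟨(dotted_KI (B := B) hp hd).1, hd⟩ c1
        rw [negB_case4 c1 c2 c3]
        rw [negB_case4 (p := (p.1, B.inv p.1 p.2.1, false))
          (fun hc => by exact absurd hc.2 (by simp))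
          (fun hc => c2 ⟨hc.1, by
            have := (hB.g2_sub _ hc.1).2.2.2 _ hc.2
            rwa [inv_inv hB hz] at this⟩) c3]
        exact Prod.ext rfl (Prod.ext (inv_inv hB hz) h2.symm)

end NegB

end BunchData
namespace BunchData

section NegC

set_option linter.unusedSectionVars false

variable {K : Type u} {Λ : Type v} [LinearOrder K] {B : BunchData K Λ}

lemma Vl_negB_self {p : K × Λ × Bool} : B.Vl p.1 (B.negB p) = (B.negB p).2.1 :=
  Vl_of_le (le_of_eq (negB_fst p).symm)

lemma Dl_negB_self {p : K × Λ × Bool} : B.Dl p.1 (B.negB p) = (B.negB p).2.2 :=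
  Dl_of_le (le_of_eq (negB_fst p).symm)

variable (hB : B.IsBunch)
include hB

lemma mul_lt_mul_right'' {u : K} {x y z : Λ} (hx : x ∈ B.G u) (hy : y ∈ B.G u)
    (hz : z ∈ B.G u) (h : B.lt u x y) : B.lt u (B.mul u x z) (B.mul u y z) := by
  rw [hB.mul_comm' u x hx z hz, hB.mul_comm' u y hy z hz]
  exact mul_lt_mul' hB hx hy hz h

lemma not_KI_of_KJ {u : K} (h : u ∈ B.KJ) : u ∉ B.KI :=
  fun hI => hB.disjJI u ⟨h, hI⟩

lemma not_KJ_of_KI {u : K} (h : u ∈ B.KI) : u ∉ B.KJ :=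
  fun hJ => hB.disjJI u ⟨hJ, h⟩

lemma negB_val_inv {p : K × Λ × Bool} (hp : p ∈ B.carrier) (hnJ : p.1 ∉ B.KJ) :
    (B.negB p).2.1 = B.inv p.1 p.2.1 := by
  by_cases c1 : p.1 ∈ B.KI ∧ p.2.2 = true
  · rw [negB_case1 c1.1 c1.2]
  · by_cases c2 : p.1 ∈ B.KI ∧ p.2.1 ∈ B.H p.1
    · have h2 : p.2.2 = false := by
        cases hd : p.2.2
        · rfl
        · exact absurd ⟨c2.1, hd⟩ c1
      rw [negB_case2 c2.1 h2 c2.2]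
    · rw [negB_case4 c1 c2 hnJ]

lemma negB_val_KJ {p : K × Λ × Bool} (hp : p ∈ B.carrier) (hJ : p.1 ∈ B.KJ) :
    (B.negB p).2.1 = B.mul p.1 (B.inv p.1 p.2.1) (B.dJ p.1) := by
  rw [negB_case3 hJ (not_KI_of_KJ hB hJ)]
  exact lowerCoverFn_eq hB hJ (hB.inv_mem _ _ (mem_G_of_carrier hB hp))

lemma negB_dot_KJ {p : K × Λ × Bool} (hJ : p.1 ∈ B.KJ) : (B.negB p).2.2 = false := by
  rw [negB_case3 hJ (not_KI_of_KJ hB hJ)]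

/-- negation is antitone -/
lemma glt_negB {p q : K × Λ × Bool} (hp : p ∈ B.carrier) (hq : q ∈ B.carrier)
    (h : B.glt p q) : B.glt (B.negB q) (B.negB p) := by
  rw [glt_iff] at h
  rw [glt_iff, negB_fst, negB_fst, max_comm q.1 p.1]
  rcases lt_trichotomy p.1 q.1 with hab | hab | hab
  · -- Config A : p.1 < q.1, level w = q.1
    rw [max_eq_right hab.le] at h ⊢
    have hP := Vl_mem hB hp hab.le
    have hQ : B.Vl q.1 q = q.2.1 := Vl_of_le le_rfl
    have hQm := Vl_mem hB hq le_rfl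
    have hiP := hB.inv_mem _ _ hP
    have hiQ := hB.inv_mem _ _ hQm
    have hVnp : B.Vl q.1 (B.negB p) = B.inv q.1 (B.Vl q.1 p) := Vl_negB_high hB hp hab
    have hDnp : B.Dl q.1 (B.negB p) = false := Dl_negB_high (B := B) hab
    have hDp : B.Dl q.1 p = false := Dl_of_lt hab
    rcases h with h | ⟨e, hd | hd⟩
    · -- strict values
      rcases hB.cover q.1 with hKo | hKJ | hKI
      · exfalso
        have := hB.g1 hKo
        simp only [Set.mem_singleton_iff] at this
        exact absurd (this ▸ hab) (not_lt.2 (hB.t_least p.1))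
      · refine Or.inl ?_
        rw [Vl_negB_self, negB_val_KJ hB hq hKJ, hVnp]
        rw [mul_dJ_lt_iff hB hKJ (hB.inv_mem _ _ (hQ ▸ hQm)) hiP, ← hQ]
        exact (inv_le_inv_iff hB hP hQm).2 h.1
      · refine Or.inl ?_
        rw [Vl_negB_self, negB_val_inv hB hq (not_KJ_of_KI hB hKI), hVnp, ← hQ]
        exact (inv_lt_inv_iff hB hP hQm).2 h
    · exact absurd (hDp ▸ hd.1) (by simp)
    · -- tie with p.1 < q.1, Dl q = false
      have hDq : q.2.2 = false := by
        have := hd.1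
        rw [hDp, Dl_of_le le_rfl] at this
        exact this.symm
      rcases hB.cover q.1 with hKo | hKJ | hKI
      · exfalso
        have := hB.g1 hKo
        simp only [Set.mem_singleton_iff] at this
        exact absurd (this ▸ hab) (not_lt.2 (hB.t_least p.1))
      · refine Or.inl ?_
        rw [Vl_negB_self, negB_val_KJ hB hq hKJ, hVnp]
        rw [mul_dJ_lt_iff hB hKJ (hB.inv_mem _ _ (hQ ▸ hQm)) hiP, ← hQ, ← e]
        exact hB.le_refl' _ _ hiP
      · -- q.1 ∈ KI : q undotted with value in H, neg q dotted
        have hPH : B.Vl q.1 p ∈ B.H q.1 := Vl_mem_H hB hp hab hKI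
        have hQH : q.2.1 ∈ B.H q.1 := by rw [← hQ, ← e]; exact hPH
        refine Or.inr ⟨?_, Or.inl ⟨?_, hDnp⟩⟩
        · rw [Vl_negB_self, negB_case2 hKI hDq hQH, hVnp]
          show B.inv q.1 q.2.1 = B.inv q.1 (B.Vl q.1 p)
          rw [← hQ, ← e]
        · rw [Dl_negB_self, negB_case2 hKI hDq hQH]
  · -- Config B : p.1 = q.1
    rw [hab, max_self] at h ⊢
    have hzp : p.2.1 ∈ B.G q.1 := by rw [← hab]; exact mem_G_of_carrier hB hp
    have hzq := mem_G_of_carrier hB hq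
    have hVq : B.Vl q.1 q = q.2.1 := Vl_of_le le_rfl
    have hVp : B.Vl q.1 p = p.2.1 := Vl_of_le (le_of_eq hab.symm)
    have hDq : B.Dl q.1 q = q.2.2 := Dl_of_le le_rfl
    have hDp : B.Dl q.1 p = p.2.2 := Dl_of_le (le_of_eq hab.symm)
    have hVnq : B.Vl q.1 (B.negB q) = (B.negB q).2.1 := Vl_negB_self
    have hVnp : B.Vl q.1 (B.negB p) = (B.negB p).2.1 :=
      Vl_of_le (by rw [negB_fst]; exact le_of_eq hab.symm)
    have hDnq : B.Dl q.1 (B.negB q) = (B.negB q).2.2 := Dl_negB_self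
    have hDnp : B.Dl q.1 (B.negB p) = (B.negB p).2.2 :=
      Dl_of_le (by rw [negB_fst]; exact le_of_eq hab.symm)
    have hizp : B.inv q.1 p.2.1 ∈ B.G q.1 := hB.inv_mem _ _ hzp
    have hizq := hB.inv_mem _ _ hzq
    rw [hVp, hVq, hDp, hDq] at h
    rw [hVnp, hVnq, hDnp, hDnq]
    rcases h with h | ⟨e, hd | hd⟩
    · -- strict values
      refine Or.inl ?_
      rcases hB.cover q.1 with hKo | hKJ | hKI
      · have hnJ : q.1 ∉ B.KJ := fun hc => hB.disjOJ q.1 ⟨hKo, hc⟩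
        rw [negB_val_inv hB hq hnJ, negB_val_inv hB hp (by rw [hab]; exact hnJ), hab]
        exact (inv_lt_inv_iff hB hzp hzq).2 h
      · rw [negB_val_KJ hB hq hKJ, negB_val_KJ hB hp (by rw [hab]; exact hKJ), hab]
        exact mul_lt_mul_right'' hB hizq hizp (dJ_mem hB hKJ)
          ((inv_lt_inv_iff hB hzp hzq).2 h)
      · have hnJ := not_KJ_of_KI hB hKI
        rw [negB_val_inv hB hq hnJ, negB_val_inv hB hp (by rw [hab]; exact hnJ), hab]
        exact (inv_lt_inv_iff hB hzp hzq).2 h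
    · -- p dotted, q undotted, equal values
      have hpd : p.2.2 = true := hd.1
      have hqd : q.2.2 = false := hd.2
      have hKI : p.1 ∈ B.KI := (dotted_KI (B := B) hp hpd).1
      have hzpH : p.2.1 ∈ B.H p.1 := (dotted_KI (B := B) hp hpd).2
      have hzqH : q.2.1 ∈ B.H q.1 := by rw [← e, ← hab]; exact hzpH
      refine Or.inr ⟨?_, Or.inl ⟨?_, ?_⟩⟩
      · rw [negB_case2 (by rw [← hab]; exact hKI) hqd hzqH, negB_case1 hKI hpd]
        show B.inv q.1 q.2.1 = B.inv p.1 p.2.1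
        rw [hab, ← e]
      · rw [negB_case2 (by rw [← hab]; exact hKI) hqd hzqH]
      · rw [negB_case1 hKI hpd]
    · exact absurd hd.2 (lt_irrefl q.1)
  · -- Config C : q.1 < p.1, level w = p.1
    rw [max_eq_left hab.le] at h ⊢
    have hQ := Vl_mem hB hq hab.le
    have hzp := mem_G_of_carrier hB hp
    have hVp : B.Vl p.1 p = p.2.1 := Vl_of_le le_rfl
    have hiQ := hB.inv_mem _ _ hQ
    have hizp := hB.inv_mem _ _ hzp
    have hVnq : B.Vl p.1 (B.negB q) = B.inv p.1 (B.Vl p.1 q) := Vl_negB_high hB hq hab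
    have hDnq : B.Dl p.1 (B.negB q) = false := Dl_negB_high (B := B) hab
    have hDq : B.Dl p.1 q = false := Dl_of_lt hab
    rcases h with h | ⟨e, hd | hd⟩
    · -- strict values: lt p.2.1 Q
      rw [hVp] at h
      rcases hB.cover p.1 with hKo | hKJ | hKI
      · refine Or.inl ?_
        have hnJ : p.1 ∉ B.KJ := fun hc => hB.disjOJ p.1 ⟨hKo, hc⟩
        rw [Vl_negB_self, negB_val_inv hB hp hnJ, hVnq]
        exact (inv_lt_inv_iff hB hzp hQ).2 h
      · -- KJ: discrete shift, may give equality with index tie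
        have hle : B.le p.1 (B.inv p.1 (B.Vl p.1 q)) ((B.negB p).2.1) := by
          rw [negB_val_KJ hB hp hKJ]
          rw [le_mul_dJ_iff hB hKJ hiQ hizp]
          exact (inv_lt_inv_iff hB hzp hQ).2 h
        rcases eq_or_ne (B.inv p.1 (B.Vl p.1 q)) ((B.negB p).2.1) with heq | hne
        · refine Or.inr ⟨?_, Or.inr ⟨?_, hab⟩⟩
          · rw [Vl_negB_self, hVnq, heq]
          · rw [hDnq, Dl_negB_self, negB_dot_KJ hB hKJ]
        · exact Or.inl (by rw [Vl_negB_self, hVnq]; exact ⟨hle, hne⟩)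
      · refine Or.inl ?_
        rw [Vl_negB_self, negB_val_inv hB hp (not_KJ_of_KI hB hKI), hVnq]
        exact (inv_lt_inv_iff hB hzp hQ).2 h
    · -- p dotted at top, values equal
      have hpd : p.2.2 = true := by rw [← Dl_of_le (le_refl p.1)]; exact hd.1
      have hKI := (dotted_KI (B := B) hp hpd).1
      refine Or.inr ⟨?_, Or.inr ⟨?_, hab⟩⟩
      · rw [Vl_negB_self, hVnq, negB_case1 hKI hpd]
        show B.inv p.1 (B.Vl p.1 q) = B.inv p.1 p.2.1
        rw [← hVp, e]
      · rw [hDnq, Dl_negB_self, negB_case1 hKI hpd]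
    · exact absurd hd.2 (not_lt.2 hab.le)

lemma glt_negB_iff {p q : K × Λ × Bool} (hp : p ∈ B.carrier) (hq : q ∈ B.carrier) :
    B.glt (B.negB q) (B.negB p) ↔ B.glt p q := by
  constructor
  · intro h
    have := glt_negB hB (negB_mem hB hq) (negB_mem hB hp) h
    rwa [negB_negB hB hp, negB_negB hB hq] at this
  · exact glt_negB hB hp hq

end NegC

end BunchData
namespace BunchData

section Rot

set_option linter.unusedSectionVars false

variable {K : Type u} {Λ : Type v} [LinearOrder K] {B : BunchData K Λ}

lemma Dl_eq_true_iff {p : K × Λ × Bool} {n : K} (h : p.1 ≤ n) :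
    B.Dl n p = true ↔ (p.1 = n ∧ p.2.2 = true) := by
  rcases eq_or_lt_of_le h with e | e
  · rw [Dl_of_le e.ge]
    exact ⟨fun hd => ⟨e, hd⟩, fun hd => hd.2⟩
  · rw [Dl_of_lt e]
    exact ⟨fun hd => absurd hd (by simp), fun hd => absurd hd.1 e.ne⟩

lemma negB_dot_iff {p : K × Λ × Bool} :
    (B.negB p).2.2 = true ↔ (p.1 ∈ B.KI ∧ p.2.2 = false ∧ p.2.1 ∈ B.H p.1) := by
  unfold negB
  split_ifs with h1 h2 h3
  · simp only [Bool.false_eq_true, false_iff]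
    rintro ⟨_, hd, _⟩
    rw [hd] at h1
    exact absurd h1.2 (by simp)
  · simp only [true_iff]
    refine ⟨h2.1, ?_, h2.2⟩
    cases hd : p.2.2
    · rfl
    · exact absurd ⟨h2.1, hd⟩ h1
  · simp only [Bool.false_eq_true, false_iff]
    rintro ⟨hI, _, hH⟩
    exact h2 ⟨hI, hH⟩
  · simp only [Bool.false_eq_true, false_iff]
    rintro ⟨hI, _, hH⟩
    exact h2 ⟨hI, hH⟩

variable (hB : B.IsBunch)
include hB

lemma le_iff_lt_or_eq' {u : K} {x y : Λ} (hx : x ∈ B.G u) (hy : y ∈ B.G u) :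
    B.le u x y ↔ B.lt u x y ∨ x = y := by
  constructor
  · intro h
    rcases eq_or_ne x y with e | e
    · exact Or.inr e
    · exact Or.inl ⟨h, e⟩
  · rintro (h | rfl)
    · exact h.1
    · exact hB.le_refl' u x hx

lemma mul_lt_mul_right_iff {u : K} {x y z : Λ} (hx : x ∈ B.G u) (hy : y ∈ B.G u)
    (hz : z ∈ B.G u) : B.lt u (B.mul u x z) (B.mul u y z) ↔ B.lt u x y := by
  rw [hB.mul_comm' u x hx z hz, hB.mul_comm' u y hy z hz]
  exact mul_lt_mul_iff hB hx hy hz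

lemma rot_c2 {u : K} {P Q R : Λ} (hP : P ∈ B.G u) (hQ : Q ∈ B.G u) (hR : R ∈ B.G u) :
    B.mul u (B.mul u (B.inv u R) (B.inv u Q)) (B.mul u P Q) =
      B.mul u P (B.inv u R) := by
  have hiR := hB.inv_mem u R hR
  have hiQ := hB.inv_mem u Q hQ
  have hz := hB.mul_mem u _ hiR _ hiQ
  have hPQ := hB.mul_mem u P hP Q hQ
  have inner : B.mul u Q (B.mul u (B.inv u R) (B.inv u Q)) = B.inv u R := by
    rw [hB.mul_comm' u _ hiR _ hiQ, ← hB.mul_assoc' u Q hQ _ hiQ _ hiR,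
      hB.mul_inv' u Q hQ, unit_mul hB hiR]
  rw [hB.mul_comm' u _ hz _ hPQ, hB.mul_assoc' u P hP Q hQ _ hz, inner]

lemma rot_lt_iff {u : K} {P Q R : Λ} (hP : P ∈ B.G u) (hQ : Q ∈ B.G u)
    (hR : R ∈ B.G u) :
    B.lt u R (B.mul u P Q) ↔ B.lt u (B.inv u Q) (B.mul u P (B.inv u R)) := by
  have hz := hB.mul_mem u _ (hB.inv_mem u R hR) _ (hB.inv_mem u Q hQ)
  have h := mul_lt_mul_iff (z := B.mul u (B.inv u R) (B.inv u Q)) hB hR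
    (hB.mul_mem u P hP Q hQ) hz
  rw [mil hB hR hQ, rot_c2 hB hP hQ hR] at h
  exact h.symm

lemma rot_le_iff {u : K} {P Q R : Λ} (hP : P ∈ B.G u) (hQ : Q ∈ B.G u)
    (hR : R ∈ B.G u) :
    B.le u R (B.mul u P Q) ↔ B.le u (B.inv u Q) (B.mul u P (B.inv u R)) := by
  have hz := hB.mul_mem u _ (hB.inv_mem u R hR) _ (hB.inv_mem u Q hQ)
  have h := mul_le_mul_iff (z := B.mul u (B.inv u R) (B.inv u Q)) hB hR
    (hB.mul_mem u P hP Q hQ) hz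
  rw [mil hB hR hQ, rot_c2 hB hP hQ hR] at h
  exact h.symm

lemma rot_eq_iff {u : K} {P Q R : Λ} (hP : P ∈ B.G u) (hQ : Q ∈ B.G u)
    (hR : R ∈ B.G u) :
    R = B.mul u P Q ↔ B.inv u Q = B.mul u P (B.inv u R) := by
  constructor
  · intro e
    have : B.mul u (B.mul u (B.inv u R) (B.inv u Q)) R =
        B.mul u (B.mul u (B.inv u R) (B.inv u Q)) (B.mul u P Q) := by rw [← e]
    rw [mil hB hR hQ, rot_c2 hB hP hQ hR] at this
    exact this
  · intro e
    have : B.mul u (B.mul u (B.inv u R) (B.inv u Q)) R =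
        B.mul u (B.mul u (B.inv u R) (B.inv u Q)) (B.mul u P Q) := by
      rw [mil hB hR hQ, rot_c2 hB hP hQ hR]
      exact e
    exact mul_cancel hB
      (hB.mul_mem u _ (hB.inv_mem u R hR) _ (hB.inv_mem u Q hQ)) hR
      (hB.mul_mem u P hP Q hQ) this

lemma H_of_mul_left {u : K} (hu : u ∈ B.KI) {P Q : Λ} (hP : P ∈ B.G u)
    (hQ : Q ∈ B.G u) (hPQ : B.mul u P Q ∈ B.H u) (hPH : P ∈ B.H u) : Q ∈ B.H u := by
  have h := (hB.g2_sub u hu).2.2.1 _ ((hB.g2_sub u hu).2.2.2 _ hPH) _ hPQ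
  have hiP := hB.inv_mem u P hP
  have e : B.mul u (B.inv u P) (B.mul u P Q) = Q := by
    rw [← hB.mul_assoc' u _ hiP P hP Q hQ, hB.mul_comm' u _ hiP P hP,
      hB.mul_inv' u P hP, unit_mul hB hQ]
  rwa [e] at h

lemma inv_mem_H_iff {u : K} (hu : u ∈ B.KI) {x : Λ} (hx : x ∈ B.G u) :
    B.inv u x ∈ B.H u ↔ x ∈ B.H u := by
  constructor
  · intro h
    have := (hB.g2_sub u hu).2.2.2 _ h
    rwa [inv_inv hB hx] at this
  · exact fun h => (hB.g2_sub u hu).2.2.2 _ h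

lemma H_mul_mem {u : K} (hu : u ∈ B.KI) {x y : Λ} (hx : x ∈ B.H u) (hy : y ∈ B.H u) :
    B.mul u x y ∈ B.H u := (hB.g2_sub u hu).2.2.1 _ hx _ hy

/-- at a KI level, the value of `negB` is the inverse of the value -/
lemma Vl_negB_notKJ {p : K × Λ × Bool} {n : K} (hp : p ∈ B.carrier) (h : p.1 ≤ n)
    (hnJ : p.1 = n → p.1 ∉ B.KJ) : B.Vl n (B.negB p) = B.inv n (B.Vl n p) := by
  rcases eq_or_lt_of_le h with e | e
  · rw [← e, Vl_negB_self, negB_val_inv hB hp (hnJ e), Vl_of_le le_rfl]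
  · exact Vl_negB_high hB hp e

end Rot

end BunchData
namespace BunchData

section Rotation

set_option linter.unusedSectionVars false

variable {K : Type u} {Λ : Type v} [LinearOrder K] {B : BunchData K Λ}

lemma bool_eq_false {x : Bool} (h : ¬ x = true) : x = false := by
  cases x
  · rfl
  · exact absurd rfl h

variable (hB : B.IsBunch)
include hB

lemma rotation {p q r : K × Λ × Bool} (hp : p ∈ B.carrier) (hq : q ∈ B.carrier)
    (hr : r ∈ B.carrier) (h : B.glt r (B.gmulB p q)) :
    B.glt (B.negB q) (B.gmulB p (B.negB r)) := by
  have hnr := negB_mem hB hr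
  have hnq := negB_mem hB hq
  set M := max p.1 (max q.1 r.1) with hMdef
  have haM : p.1 ≤ M := le_max_left _ _
  have hbM : q.1 ≤ M := le_trans (le_max_left _ _) (le_max_right _ _)
  have hcM : r.1 ≤ M := le_trans (le_max_right _ _) (le_max_right _ _)
  have habM : max p.1 q.1 ≤ M := max_le haM hbM
  have hacM : max p.1 r.1 ≤ M := max_le haM hcM
  have hancM : max p.1 (B.negB r).1 ≤ M := by rw [negB_fst]; exact hacM
  have eL : max r.1 (B.gmulB p q).1 = M := by
    rw [gmulB_fst, max_comm r.1, max_assoc]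
  have eR : max (B.negB q).1 (B.gmulB p (B.negB r)).1 = M := by
    rw [negB_fst, gmulB_fst, negB_fst]
    exact max_left_comm q.1 p.1 r.1
  rw [glt_iff, eL] at h
  rw [gmulB_fst] at h
  rw [glt_iff, eR]
  rw [gmulB_fst, negB_fst, negB_fst]
  have hP := Vl_mem hB hp haM
  have hQ := Vl_mem hB hq hbM
  have hR := Vl_mem hB hr hcM
  have hVpq : B.Vl M (B.gmulB p q) = B.mul M (B.Vl M p) (B.Vl M q) :=
    Vl_gmulB hB hp hq habM
  have hVpnr : B.Vl M (B.gmulB p (B.negB r)) =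
      B.mul M (B.Vl M p) (B.Vl M (B.negB r)) := Vl_gmulB hB hp hnr hancM
  rcases hB.cover M with hKo | hKJ | hKI
  · -- Ko : everything lives at the bottom layer
    have hMnI : M ∉ B.KI := fun hc => hB.disjOI M ⟨hKo, hc⟩
    have hMnJ : M ∉ B.KJ := fun hc => hB.disjOJ M ⟨hKo, hc⟩
    have hMt : M = B.t := hB.g1 hKo
    have haE : p.1 = M := le_antisymm haM (hMt ▸ hB.t_least p.1)
    have hbE : q.1 = M := le_antisymm hbM (hMt ▸ hB.t_least q.1)
    have hcE : r.1 = M := le_antisymm hcM (hMt ▸ hB.t_least r.1)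
    have hVnq : B.Vl M (B.negB q) = B.inv M (B.Vl M q) :=
      Vl_negB_notKJ hB hq hbM (fun e => by rw [e]; exact hMnJ)
    have hVnr : B.Vl M (B.negB r) = B.inv M (B.Vl M r) :=
      Vl_negB_notKJ hB hr hcM (fun e => by rw [e]; exact hMnJ)
    have hDr : B.Dl M r = false := by
      apply bool_eq_false
      intro hd
      exact hMnI (hcE ▸ (dotted_KI (B := B) hr ((Dl_eq_true_iff hcM).1 hd).2).1)
    have hDpq : B.Dl M (B.gmulB p q) = false := by
      apply bool_eq_false
      intro hd
      have h1 := (Dl_eq_true_iff (by rw [gmulB_fst]; exact habM)).1 hd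
      rw [gmulB_fst] at h1
      exact hMnI (h1.1 ▸ ((gmulB_dot_iff p q).1 h1.2).1)
    have hDnq : B.Dl M (B.negB q) = false := by
      apply bool_eq_false
      intro hd
      have h1 := (Dl_eq_true_iff (by rw [negB_fst]; exact hbM)).1 hd
      rw [negB_fst] at h1
      exact hMnI (hbE ▸ (negB_dot_iff.1 h1.2).1)
    have hDpnr : B.Dl M (B.gmulB p (B.negB r)) = false := by
      apply bool_eq_false
      intro hd
      have h1 := (Dl_eq_true_iff (by rw [gmulB_fst]; exact hancM)).1 hd
      rw [gmulB_fst] at h1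
      exact hMnI (h1.1 ▸ ((gmulB_dot_iff p (B.negB r)).1 h1.2).1)
    have hstrict : B.lt M (B.Vl M r) (B.Vl M (B.gmulB p q)) := by
      rcases h with h | ⟨e, ⟨hd1, _⟩ | ⟨_, hidx⟩⟩
      · exact h
      · rw [hDr] at hd1; exact absurd hd1 (by simp)
      · exact absurd hidx (not_lt.2 (le_trans habM hcE.ge))
    refine Or.inl ?_
    rw [hVnq, hVpnr, hVnr]
    rw [hVpq] at hstrict
    exact (rot_lt_iff hB hP hQ hR).1 hstrict
  · -- KJ : the discrete layer
    have hMnI : M ∉ B.KI := fun hc => hB.disjJI M ⟨hKJ, hc⟩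
    have hDr : B.Dl M r = false := by
      apply bool_eq_false
      intro hd
      have h1 := (Dl_eq_true_iff hcM).1 hd
      exact hMnI (h1.1 ▸ (dotted_KI (B := B) hr h1.2).1)
    have hDpq : B.Dl M (B.gmulB p q) = false := by
      apply bool_eq_false
      intro hd
      have h1 := (Dl_eq_true_iff (by rw [gmulB_fst]; exact habM)).1 hd
      rw [gmulB_fst] at h1
      exact hMnI (h1.1 ▸ ((gmulB_dot_iff p q).1 h1.2).1)
    have hDnq : B.Dl M (B.negB q) = false := by
      apply bool_eq_false
      intro hd
      have h1 := (Dl_eq_true_iff (by rw [negB_fst]; exact hbM)).1 hd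
      rw [negB_fst] at h1
      exact hMnI (h1.1 ▸ (negB_dot_iff.1 h1.2).1)
    have hDpnr : B.Dl M (B.gmulB p (B.negB r)) = false := by
      apply bool_eq_false
      intro hd
      have h1 := (Dl_eq_true_iff (by rw [gmulB_fst]; exact hancM)).1 hd
      rw [gmulB_fst] at h1
      exact hMnI (h1.1 ▸ ((gmulB_dot_iff p (B.negB r)).1 h1.2).1)
    -- extract : le or lt information from h
    have hiQ := hB.inv_mem M _ hQ
    have hiR := hB.inv_mem M _ hR
    have hPiR := hB.mul_mem M _ hP _ hiR
    have hd := dJ_mem hB hKJ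
    rcases eq_or_lt_of_le hbM with hbE | hbE
    · -- q at top level : negB q has the lower-cover shift
      have hVnq : B.Vl M (B.negB q) =
          B.mul M (B.inv M (B.Vl M q)) (B.dJ M) := by
        rw [← hbE, Vl_negB_self, negB_val_KJ hB hq (hbE ▸ hKJ), Vl_of_le le_rfl]
      rcases eq_or_lt_of_le hcM with hcE | hcE
      · -- c = M as well : strict on both sides
        have hVnr : B.Vl M (B.negB r) =
            B.mul M (B.inv M (B.Vl M r)) (B.dJ M) := by
          rw [← hcE, Vl_negB_self, negB_val_KJ hB hr (hcE ▸ hKJ), Vl_of_le le_rfl]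
        have hstrict : B.lt M (B.Vl M r) (B.Vl M (B.gmulB p q)) := by
          rcases h with h | ⟨e, ⟨hd1, _⟩ | ⟨_, hidx⟩⟩
          · exact h
          · rw [hDr] at hd1; exact absurd hd1 (by simp)
          · exact absurd hidx (not_lt.2 (le_trans habM hcE.ge))
        refine Or.inl ?_
        rw [hVnq, hVpnr, hVnr, ← hB.mul_assoc' M _ hP _ hiR _ hd]
        rw [mul_lt_mul_right_iff hB hiQ hPiR hd]
        rw [hVpq] at hstrict
        exact (rot_lt_iff hB hP hQ hR).1 hstrict
      · -- c < M : LHS is ≤, RHS strict via the shift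
        have hVnr : B.Vl M (B.negB r) = B.inv M (B.Vl M r) := Vl_negB_high hB hr hcE
        have hle : B.le M (B.Vl M r) (B.Vl M (B.gmulB p q)) := by
          rcases h with h | ⟨e, ⟨hd1, _⟩ | ⟨_, _⟩⟩
          · exact h.1
          · rw [hDr] at hd1; exact absurd hd1 (by simp)
          · rw [e]
            exact hB.le_refl' M _ (Vl_mem hB (gmulB_mem hB hp hq)
              (by rw [gmulB_fst]; exact habM))
        refine Or.inl ?_
        rw [hVnq, hVpnr, hVnr]
        rw [mul_dJ_lt_iff hB hKJ hiQ hPiR]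
        rw [hVpq] at hle
        exact (rot_le_iff hB hP hQ hR).1 hle
    · -- b < M
      have hVnq : B.Vl M (B.negB q) = B.inv M (B.Vl M q) := Vl_negB_high hB hq hbE
      rcases eq_or_lt_of_le hcM with hcE | hcE
      · -- c = M : LHS strict, RHS gets ≤ via the shift
        have hVnr : B.Vl M (B.negB r) =
            B.mul M (B.inv M (B.Vl M r)) (B.dJ M) := by
          rw [← hcE, Vl_negB_self, negB_val_KJ hB hr (hcE ▸ hKJ), Vl_of_le le_rfl]
        have hstrict : B.lt M (B.Vl M r) (B.Vl M (B.gmulB p q)) := by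
          rcases h with h | ⟨e, ⟨hd1, _⟩ | ⟨_, hidx⟩⟩
          · exact h
          · rw [hDr] at hd1; exact absurd hd1 (by simp)
          · exact absurd hidx (not_lt.2 (le_trans habM hcE.ge))
        have hle : B.le M (B.Vl M (B.negB q)) (B.Vl M (B.gmulB p (B.negB r))) := by
          rw [hVnq, hVpnr, hVnr, ← hB.mul_assoc' M _ hP _ hiR _ hd]
          rw [le_mul_dJ_iff hB hKJ hiQ hPiR]
          rw [hVpq] at hstrict
          exact (rot_lt_iff hB hP hQ hR).1 hstrict
        rcases (le_iff_lt_or_eq' hB (Vl_mem hB hnq (by rw [negB_fst]; exact hbM))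
          (Vl_mem hB (gmulB_mem hB hp hnr) (by rw [gmulB_fst]; exact hancM))).1 hle
          with hlt | heq
        · exact Or.inl hlt
        · refine Or.inr ⟨heq, Or.inr ⟨hDnq.trans hDpnr.symm, ?_⟩⟩
          rw [(max_eq_right (show p.1 ≤ r.1 by rw [hcE]; exact haM)).trans hcE]
          exact hbE
      · -- b < M, c < M : then a = M, both sides are ≤ with the same tie
        have haE : p.1 = M := by
          rcases eq_or_lt_of_le haM with haE | haE
          · exact haE
          · exact absurd (hMdef ▸ max_lt haE (max_lt hbE hcE)) (lt_irrefl M)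
        have hVnr : B.Vl M (B.negB r) = B.inv M (B.Vl M r) := Vl_negB_high hB hr hcE
        have hle : B.le M (B.Vl M r) (B.Vl M (B.gmulB p q)) := by
          rcases h with h | ⟨e, _⟩
          · exact h.1
          · rw [e]
            exact hB.le_refl' M _ (Vl_mem hB (gmulB_mem hB hp hq)
              (by rw [gmulB_fst]; exact habM))
        have hle2 : B.le M (B.Vl M (B.negB q)) (B.Vl M (B.gmulB p (B.negB r))) := by
          rw [hVnq, hVpnr, hVnr]
          rw [hVpq] at hle
          exact (rot_le_iff hB hP hQ hR).1 hle
        rcases (le_iff_lt_or_eq' hB (Vl_mem hB hnq (by rw [negB_fst]; exact hbM))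
          (Vl_mem hB (gmulB_mem hB hp hnr) (by rw [gmulB_fst]; exact hancM))).1 hle2
          with hlt | heq
        · exact Or.inl hlt
        · refine Or.inr ⟨heq, Or.inr ⟨hDnq.trans hDpnr.symm, ?_⟩⟩
          exact lt_of_lt_of_le hbE (le_max_of_le_left haE.ge)
  · -- KI : the dotted layer
    have hMnJ : M ∉ B.KJ := fun hc => hB.disjJI M ⟨hc, hKI⟩
    have hVnq : B.Vl M (B.negB q) = B.inv M (B.Vl M q) :=
      Vl_negB_notKJ hB hq hbM (fun e => e ▸ hMnJ)
    have hVnr : B.Vl M (B.negB r) = B.inv M (B.Vl M r) :=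
      Vl_negB_notKJ hB hr hcM (fun e => e ▸ hMnJ)
    rcases h with h | ⟨e, htie⟩
    · refine Or.inl ?_
      rw [hVnq, hVpnr, hVnr]
      rw [hVpq] at h
      exact (rot_lt_iff hB hP hQ hR).1 h
    · rw [hVpq] at e
      have heq : B.Vl M (B.negB q) = B.Vl M (B.gmulB p (B.negB r)) := by
        rw [hVnq, hVpnr, hVnr]
        exact (rot_eq_iff hB hP hQ hR).1 e
      refine Or.inr ⟨heq, ?_⟩
      -- now the tie analysis
      have hPinvR : B.mul M (B.Vl M p) (B.inv M (B.Vl M r)) = B.inv M (B.Vl M q) :=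
        ((rot_eq_iff hB hP hQ hR).1 e).symm
      -- dot characterizations
      have hDr_iff : B.Dl M r = true ↔ (r.1 = M ∧ r.2.2 = true) := Dl_eq_true_iff hcM
      have hDpq_iff : B.Dl M (B.gmulB p q) = true ↔
          (max p.1 q.1 = M ∧ B.mul M (B.Vl M p) (B.Vl M q) ∈ B.H M ∧
            ¬(B.UHl M p ∧ B.UHl M q)) := by
        rw [Dl_eq_true_iff (by rw [gmulB_fst]; exact habM)]
        rw [gmulB_fst]
        constructor
        · rintro ⟨hab, hd⟩
          have h1 := (gmulB_dot_iff p q).1 hd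
          rw [hab] at h1
          exact ⟨hab, h1.2.1, h1.2.2⟩
        · rintro ⟨hab, h1, h2⟩
          refine ⟨hab, (gmulB_dot_iff p q).2 ?_⟩
          rw [hab]
          exact ⟨hKI, h1, h2⟩
      have hDpnr_iff : B.Dl M (B.gmulB p (B.negB r)) = true ↔
          (max p.1 r.1 = M ∧ B.Vl M q ∈ B.H M ∧
            ¬(B.UHl M p ∧ B.UHl M (B.negB r))) := by
        rw [Dl_eq_true_iff (by rw [gmulB_fst]; exact hancM)]
        rw [gmulB_fst, negB_fst]
        constructor
        · rintro ⟨hac, hd⟩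
          have h1 := (gmulB_dot_iff p (B.negB r)).1 hd
          rw [negB_fst, hac] at h1
          have h2 := h1.2.1
          rw [hVnr, hPinvR, inv_mem_H_iff hB hKI hQ] at h2
          exact ⟨hac, h2, h1.2.2⟩
        · rintro ⟨hac, h1, h2⟩
          refine ⟨hac, (gmulB_dot_iff p (B.negB r)).2 ?_⟩
          rw [negB_fst, hac]
          refine ⟨hKI, ?_, h2⟩
          rw [hVnr, hPinvR, inv_mem_H_iff hB hKI hQ]
          exact h1
      have hDnq_iff : B.Dl M (B.negB q) = true ↔
          (q.1 = M ∧ q.2.2 = false ∧ B.Vl M q ∈ B.H M) := by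
        rw [Dl_eq_true_iff (by rw [negB_fst]; exact hbM), negB_fst]
        constructor
        · rintro ⟨hbE, hd⟩
          have h1 := negB_dot_iff.1 hd
          refine ⟨hbE, h1.2.1, ?_⟩
          rw [← hbE, Vl_of_le le_rfl]
          exact h1.2.2
        · rintro ⟨hbE, h1, h2⟩
          rw [← hbE] at h2
          rw [Vl_of_le le_rfl] at h2
          exact ⟨hbE, negB_dot_iff.2 ⟨by rw [hbE]; exact hKI, h1, h2⟩⟩
      have hUHnr_iff : B.UHl M (B.negB r) ↔
          (B.Vl M r ∈ B.H M ∧ ¬(r.1 = M ∧ r.2.2 = false ∧ B.Vl M r ∈ B.H M)) := by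
        unfold UHl
        rw [hVnr, inv_mem_H_iff hB hKI hR]
        constructor
        · rintro ⟨h1, h2⟩
          refine ⟨h1, fun hc => ?_⟩
          have hd : B.Dl M (B.negB r) = true := by
            rw [Dl_eq_true_iff (by rw [negB_fst]; exact hcM), negB_fst]
            refine ⟨hc.1, negB_dot_iff.2 ⟨by rw [hc.1]; exact hKI, hc.2.1, ?_⟩⟩
            have := hc.2.2
            rwa [← hc.1, Vl_of_le le_rfl] at this
          rw [hd] at h2
          exact absurd h2 (by simp)
        · rintro ⟨h1, h2⟩
          refine ⟨h1, bool_eq_false fun hd => ?_⟩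
          have h3 := (Dl_eq_true_iff (by rw [negB_fst]; exact hcM)).1 hd
          rw [negB_fst] at h3
          have h4 := negB_dot_iff.1 h3.2
          refine h2 ⟨h3.1, h4.2.1, ?_⟩
          rw [← h3.1, Vl_of_le le_rfl]
          exact h4.2.2
      have hUHp_below : p.1 < M → B.UHl M p :=
        fun hlt => ⟨Vl_mem_H hB hp hlt hKI, Dl_of_lt hlt⟩
      have hUHq_below : q.1 < M → B.UHl M q :=
        fun hlt => ⟨Vl_mem_H hB hq hlt hKI, Dl_of_lt hlt⟩
      have hHr_below : r.1 < M → B.Vl M r ∈ B.H M :=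
        fun hlt => Vl_mem_H hB hr hlt hKI
      rcases htie with ⟨hdr, hdpq⟩ | ⟨hdeq, hidx⟩
      · -- CASE A : r dotted at top, product undotted
        obtain ⟨hcE, hrd⟩ := hDr_iff.1 hdr
        have hHr : B.Vl M r ∈ B.H M := by
          rw [← hcE, Vl_of_le le_rfl]
          exact (dotted_KI (B := B) hr hrd).2
        have hHpq : B.mul M (B.Vl M p) (B.Vl M q) ∈ B.H M := e ▸ hHr
        have hUHnr : B.UHl M (B.negB r) := hUHnr_iff.2
          ⟨hHr, fun hc => by rw [hc.2.1] at hrd; exact absurd hrd (by simp)⟩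
        have hacE : max p.1 r.1 = M :=
          (max_eq_right (show p.1 ≤ r.1 by rw [hcE]; exact haM)).trans hcE
        have hDpnr_false : B.Dl M (B.gmulB p (B.negB r)) = false := by
          apply bool_eq_false
          intro hd
          obtain ⟨_, hHq, hnUH⟩ := hDpnr_iff.1 hd
          -- need UHp to contradict : get it from the pq-dot being false
          have hnd : ¬(max p.1 q.1 = M ∧ B.mul M (B.Vl M p) (B.Vl M q) ∈ B.H M ∧
              ¬(B.UHl M p ∧ B.UHl M q)) := fun hc => by
            rw [hDpq_iff.2 hc] at hdpq; exact absurd hdpq (by simp)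
          by_cases hab : max p.1 q.1 = M
          · have hUHpq : B.UHl M p ∧ B.UHl M q := by
              by_contra hc
              exact hnd ⟨hab, hHpq, hc⟩
            exact hnUH ⟨hUHpq.1, hUHnr⟩
          · have halt : p.1 < M := lt_of_le_of_ne haM (fun hc => hab (by
              rw [hc]; exact max_eq_left (hc ▸ hbM)))
            exact hnUH ⟨hUHp_below halt, hUHnr⟩
        -- decide the right tie by whether q is at the top
        by_cases hbE : q.1 = M
        · -- q at top : q must be undotted in H, so neg q is dotted
          have hnd : ¬(max p.1 q.1 = M ∧ B.mul M (B.Vl M p) (B.Vl M q) ∈ B.H M ∧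
              ¬(B.UHl M p ∧ B.UHl M q)) := fun hc => by
            rw [hDpq_iff.2 hc] at hdpq; exact absurd hdpq (by simp)
          have hab : max p.1 q.1 = M :=
            (max_eq_right (show p.1 ≤ q.1 by rw [hbE]; exact haM)).trans hbE
          have hUHpq : B.UHl M p ∧ B.UHl M q := by
            by_contra hc
            exact hnd ⟨hab, hHpq, hc⟩
          have hqd : q.2.2 = false := by
            apply bool_eq_false
            intro hd
            have := hUHpq.2.2
            rw [Dl_of_le (le_of_eq hbE.symm : M ≤ q.1)] at this
            rw [this] at hd
            exact absurd hd (by simp)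
          exact Or.inl ⟨hDnq_iff.2 ⟨hbE, hqd, hUHpq.2.1⟩, hDpnr_false⟩
        · -- q below : tie on indices
          have hblt : q.1 < M := lt_of_le_of_ne hbM hbE
          have hDnq_false : B.Dl M (B.negB q) = false := by
            apply bool_eq_false
            intro hd
            exact hbE (hDnq_iff.1 hd).1
          refine Or.inr ⟨hDnq_false.trans hDpnr_false.symm, ?_⟩
          rw [hacE]
          exact hblt
      · -- CASE B : equal dots and index tie c < max a b
        have hab : max p.1 q.1 = M := by
          have h1 : M = max (max p.1 q.1) r.1 := by rw [max_assoc]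
          rw [h1, max_eq_left hidx.le]
        have hclt : r.1 < M := lt_of_lt_of_le hidx habM
        have hDr_false : B.Dl M r = false := Dl_of_lt hclt
        have hDpq_false : B.Dl M (B.gmulB p q) = false := by
          rw [← hdeq, hDr_false]
        have hHr : B.Vl M r ∈ B.H M := hHr_below hclt
        have hHpq : B.mul M (B.Vl M p) (B.Vl M q) ∈ B.H M := e ▸ hHr
        have hnd : ¬(max p.1 q.1 = M ∧ B.mul M (B.Vl M p) (B.Vl M q) ∈ B.H M ∧
            ¬(B.UHl M p ∧ B.UHl M q)) := fun hc => by
          rw [hDpq_iff.2 hc] at hDpq_false; exact absurd hDpq_false (by simp)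
        have hUHpq : B.UHl M p ∧ B.UHl M q := by
          by_contra hc
          exact hnd ⟨hab, hHpq, hc⟩
        have hUHnr : B.UHl M (B.negB r) :=
          ⟨by rw [hVnr, inv_mem_H_iff hB hKI hR]; exact hHr, Dl_negB_high (B := B) hclt⟩
        have hDpnr_false : B.Dl M (B.gmulB p (B.negB r)) = false := by
          apply bool_eq_false
          intro hd
          exact (hDpnr_iff.1 hd).2.2 ⟨hUHpq.1, hUHnr⟩
        by_cases hbE : q.1 = M
        · -- neg q dotted
          have hqd : q.2.2 = false := by
            apply bool_eq_false
            intro hd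
            have := hUHpq.2.2
            rw [Dl_of_le (le_of_eq hbE.symm : M ≤ q.1)] at this
            rw [this] at hd
            exact absurd hd (by simp)
          exact Or.inl ⟨hDnq_iff.2 ⟨hbE, hqd, hUHpq.2.1⟩, hDpnr_false⟩
        · have hblt : q.1 < M := lt_of_le_of_ne hbM hbE
          have hDnq_false : B.Dl M (B.negB q) = false := by
            apply bool_eq_false
            intro hd
            exact hbE (hDnq_iff.1 hd).1
          refine Or.inr ⟨hDnq_false.trans hDpnr_false.symm, ?_⟩
          -- need q.1 < max p.1 r.1 : here p.1 = M since q,r are below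
          have haE : p.1 = M := by
            by_contra hc
            have halt : p.1 < M := lt_of_le_of_ne haM hc
            have : max p.1 q.1 < M := max_lt halt hblt
            rw [hab] at this
            exact lt_irrefl M this
          exact lt_of_lt_of_le hblt (le_max_of_le_left haE.ge)

end Rotation

end BunchData
namespace BunchData

section Final

set_option linter.unusedSectionVars false

variable {K : Type u} {Λ : Type v} [LinearOrder K] {B : BunchData K Λ}

variable (hB : B.IsBunch)
include hB

lemma fB_mem : B.fB ∈ B.carrier := negB_mem hB (tB_mem hB)

omit hB in
lemma fB_fst : B.fB.1 = B.t := negB_fst B.tB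

lemma impB_mem {p r : K × Λ × Bool} (hp : p ∈ B.carrier) (hr : r ∈ B.carrier) :
    B.impB p r ∈ B.carrier :=
  negB_mem hB (gmulB_mem hB hp (negB_mem hB hr))

lemma rotation_iff {p q r : K × Λ × Bool} (hp : p ∈ B.carrier) (hq : q ∈ B.carrier)
    (hr : r ∈ B.carrier) :
    B.glt r (B.gmulB p q) ↔ B.glt (B.negB q) (B.gmulB p (B.negB r)) := by
  constructor
  · exact rotation hB hp hq hr
  · intro h
    have h2 := rotation hB hp (negB_mem hB hr) (negB_mem hB hq) h
    rwa [negB_negB hB hq, negB_negB hB hr] at h2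

lemma residuationB {p q r : K × Λ × Bool} (hp : p ∈ B.carrier) (hq : q ∈ B.carrier)
    (hr : r ∈ B.carrier) :
    (B.gle (B.gmulB p q) r ↔ B.gle q (B.impB p r)) := by
  have hpq := gmulB_mem hB hp hq
  have hnr := negB_mem hB hr
  have hpnr := gmulB_mem hB hp hnr
  have himp : B.impB p r = B.negB (B.gmulB p (B.negB r)) := rfl
  rw [himp]
  rw [← not_glt_iff hB hr hpq, ← not_glt_iff hB (negB_mem hB hpnr) hq]
  apply not_congr
  rw [rotation_iff hB hp hq hr]
  constructor
  · intro h
    -- glt (neg q) (p * neg r) → glt (neg (p * neg r)) q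
    have h2 := glt_negB hB (negB_mem hB hq) hpnr h
    rwa [negB_negB hB hq] at h2
  · intro h
    have h2 := glt_negB hB (negB_mem hB hpnr) hq h
    rwa [negB_negB hB hpnr] at h2

lemma impB_fB {p : K × Λ × Bool} (hp : p ∈ B.carrier) : B.impB p B.fB = B.negB p := by
  show B.negB (B.gmulB p (B.negB (B.negB B.tB))) = B.negB p
  rw [negB_negB hB (tB_mem hB), gmulB_tB hB hp]

lemma odd_Ko (h : B.t ∈ B.Ko) : B.negB B.tB = B.tB := by
  have h1 : ¬(B.tB.1 ∈ B.KI ∧ B.tB.2.2 = true) := fun hc =>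
    Bool.false_ne_true hc.2
  have h2 : ¬(B.tB.1 ∈ B.KI ∧ B.tB.2.1 ∈ B.H B.tB.1) := fun hc =>
    hB.disjOI B.t ⟨h, hc.1⟩
  have h3 : B.tB.1 ∉ B.KJ := fun hc => hB.disjOJ B.t ⟨h, hc⟩
  rw [negB_case4 h1 h2 h3]
  exact Prod.ext rfl (Prod.ext (inv_unit hB) rfl)

/-- the base comparison with `t` -/
lemma glt_tB_iff {p : K × Λ × Bool} (hp : p ∈ B.carrier) :
    B.glt p B.tB ↔ (B.lt p.1 (B.Vl p.1 p) (B.unit p.1) ∨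
      (B.Vl p.1 p = B.unit p.1 ∧ B.Dl p.1 p = true)) := by
  rw [glt_iff]
  have hm : max p.1 B.tB.1 = p.1 := max_eq_left (hB.t_least p.1)
  rw [hm, Vl_tB hB, Dl_tB (B := B)]
  constructor
  · rintro (h | ⟨e, ⟨h1, _⟩ | ⟨_, h2⟩⟩)
    · exact Or.inl h
    · exact Or.inr ⟨e, h1⟩
    · exact absurd h2 (not_lt.2 (hB.t_least p.1))
  · rintro (h | ⟨e, h1⟩)
    · exact Or.inl h
    · exact Or.inr ⟨e, Or.inl ⟨h1, rfl⟩⟩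

/- ### the `t ∈ KJ` case -/

lemma fB_eq_KJ (h : B.t ∈ B.KJ) : B.fB = (B.t, B.dJ B.t, false) := by
  show B.negB B.tB = _
  rw [negB_case3 (p := B.tB) h (not_KI_of_KJ hB h)]
  show (B.t, B.lowerCoverFn B.t (B.inv B.t (B.unit B.t)), false) = _
  rw [inv_unit hB]
  rfl

lemma even_KJ (h : B.t ∈ B.KJ) {p : K × Λ × Bool} (hp : p ∈ B.carrier) :
    B.glt p B.tB ↔ B.gle p B.fB := by
  have hfB := fB_eq_KJ hB h
  have hfB1 : B.fB.1 = B.t := fB_fst (B := B)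
  have hfv : B.fB.2.1 = B.dJ B.t := by rw [hfB]
  have hfd : B.fB.2.2 = false := by rw [hfB]
  have hd := dJ_mem hB h
  rw [glt_tB_iff hB hp]
  rcases eq_or_lt_of_le (hB.t_least p.1) with hE | hlt
  · -- B.t = p.1
    have hz : B.Vl p.1 p = p.2.1 := Vl_of_le le_rfl
    have hzG : p.2.1 ∈ B.G B.t := by rw [hE]; exact mem_G_of_carrier hB hp
    have hpd : p.2.2 = false := bool_eq_false fun hdd =>
      (not_KI_of_KJ hB h) (by rw [hE]; exact (dotted_KI (B := B) hp hdd).1)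
    have hDp : B.Dl p.1 p = p.2.2 := Dl_of_le le_rfl
    have hm : max p.1 B.fB.1 = p.1 := max_eq_left (by rw [hfB1]; exact hB.t_least p.1)
    have hVf : B.Vl p.1 B.fB = B.dJ B.t := by
      rw [Vl_of_le (by rw [hfB1, ← hE] : p.1 ≤ B.fB.1), hfv]
    have hDf : B.Dl p.1 B.fB = false := by
      rw [Dl_of_le (by rw [hfB1, ← hE] : p.1 ≤ B.fB.1), hfd]
    have hshift : B.le B.t p.2.1 (B.dJ B.t) ↔ B.lt B.t p.2.1 (B.unit B.t) := by
      rw [← unit_mul hB hd]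
      exact le_mul_dJ_iff hB h hzG (hB.unit_mem B.t)
    constructor
    · rintro (hg | ⟨_, hdd⟩)
      · -- strict below unit : p ≤ f
        rw [hz, ← hE] at hg
        have hle := hshift.2 hg
        rcases (le_iff_lt_or_eq' hB hzG hd).1 hle with hlt2 | heq
        · refine Or.inl ((glt_iff p B.fB).2 ?_)
          rw [hm, hVf, hz, ← hE]
          exact Or.inl hlt2
        · exact Or.inr (by rw [hfB]; exact Prod.ext hE.symm (Prod.ext heq hpd))
      · rw [hDp, hpd] at hdd; exact absurd hdd (by simp)
    · rintro (hg | rfl)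
      · rw [glt_iff, hm, hVf, hz, hDf, hDp, hpd] at hg
        rw [← hE] at hg
        refine Or.inl ?_
        rw [hz, ← hE]
        rcases hg with hg | ⟨e, ⟨h1, _⟩ | ⟨_, h2⟩⟩
        · exact hshift.1 hg.1
        · exact absurd h1 (by simp)
        · exact absurd h2 (by rw [hfB1]; exact lt_irrefl B.t)
      · refine Or.inl ?_
        rw [hz, hfv, ← hE]
        exact dJ_lt_unit hB h
  · -- t < p.1
    have hm : max p.1 B.fB.1 = p.1 := max_eq_left (by rw [hfB1]; exact hB.t_least p.1)
    have hVf : B.Vl p.1 B.fB = B.unit p.1 := by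
      rw [Vl_of_lt (by rw [hfB1]; exact hlt : B.fB.1 < p.1), hfB1, hfv, tr_dJ hB h hlt]
    have hDf : B.Dl p.1 B.fB = false := Dl_of_lt (by rw [hfB1]; exact hlt)
    have hne : p ≠ B.fB := fun e => absurd (by rw [e, hfB1] : p.1 = B.t) hlt.ne'
    constructor
    · rintro (hg | ⟨e, hd2⟩)
      · exact Or.inl ((glt_iff p B.fB).2 (by rw [hm, hVf]; exact Or.inl hg))
      · exact Or.inl ((glt_iff p B.fB).2 (by
          rw [hm, hVf, hDf]
          exact Or.inr ⟨e, Or.inl ⟨hd2, rfl⟩⟩))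
    · rintro (hg | rfl)
      · rw [glt_iff, hm, hVf, hDf] at hg
        rcases hg with hg | ⟨e, ⟨h1, _⟩ | ⟨_, h2⟩⟩
        · exact Or.inl hg
        · exact Or.inr ⟨e, h1⟩
        · exact absurd h2 (by rw [hfB1]; exact not_lt.2 (hB.t_least p.1))
      · exact absurd rfl hne

lemma fB_not_idem_KJ (h : B.t ∈ B.KJ) : B.gmulB B.fB B.fB ≠ B.fB := by
  intro hc
  have hfB1 : B.fB.1 = B.t := fB_fst (B := B)
  have hfv : B.fB.2.1 = B.dJ B.t := by rw [fB_eq_KJ hB h]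
  have hd := dJ_mem hB h
  have hval := congrArg (fun x => x.2.1) hc
  simp only [gmulB_val] at hval
  rw [hfB1, max_self] at hval
  have hVf : B.Vl B.t B.fB = B.dJ B.t := by
    rw [Vl_of_le (le_of_eq hfB1.symm), hfv]
  rw [hVf, hfv] at hval
  -- hval : mul t d d = d
  have : B.mul B.t (B.dJ B.t) (B.dJ B.t) = B.mul B.t (B.dJ B.t) (B.unit B.t) := by
    rw [hval, hB.mul_unit' B.t _ hd]
  have := mul_cancel hB hd hd (hB.unit_mem B.t) this
  exact (dJ_lt_unit hB h).2 this

/- ### the `t ∈ KI` case -/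

lemma fB_eq_KI (h : B.t ∈ B.KI) : B.fB = (B.t, B.unit B.t, true) := by
  show B.negB B.tB = _
  rw [negB_case2 (p := B.tB) h rfl (hB.g2_sub B.t h).2.1]
  show (B.t, B.inv B.t (B.unit B.t), true) = _
  rw [inv_unit hB]

lemma even_KI (h : B.t ∈ B.KI) {p : K × Λ × Bool} (hp : p ∈ B.carrier) :
    B.glt p B.tB ↔ B.gle p B.fB := by
  have hfB := fB_eq_KI hB h
  have hfB1 : B.fB.1 = B.t := fB_fst (B := B)
  have hfv : B.fB.2.1 = B.unit B.t := by rw [hfB]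
  have hfd : B.fB.2.2 = true := by rw [hfB]
  rw [glt_tB_iff hB hp]
  rcases eq_or_lt_of_le (hB.t_least p.1) with hE | hlt
  · -- B.t = p.1
    have hz : B.Vl p.1 p = p.2.1 := Vl_of_le le_rfl
    have hDp : B.Dl p.1 p = p.2.2 := Dl_of_le le_rfl
    have hm : max p.1 B.fB.1 = p.1 := max_eq_left (by rw [hfB1]; exact hB.t_least p.1)
    have hVf : B.Vl p.1 B.fB = B.unit B.t := by
      rw [Vl_of_le (by rw [hfB1, ← hE] : p.1 ≤ B.fB.1), hfv]
    have hDf : B.Dl p.1 B.fB = true := by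
      rw [Dl_of_le (by rw [hfB1, ← hE] : p.1 ≤ B.fB.1), hfd]
    constructor
    · rintro (hg | ⟨e, hdd⟩)
      · refine Or.inl ((glt_iff p B.fB).2 ?_)
        rw [hm, hVf, hE]
        exact Or.inl hg
      · refine Or.inr ?_
        rw [hfB]
        refine Prod.ext hE.symm (Prod.ext ?_ ?_)
        · rw [← hz, e, ← hE]
        · rw [← hDp]; exact hdd
    · rintro (hg | rfl)
      · rw [glt_iff, hm, hVf, hDf, hDp] at hg
        rcases hg with hg | ⟨e, ⟨_, h1⟩ | ⟨_, h2⟩⟩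
        · refine Or.inl ?_
          rw [← hE] at hg ⊢
          exact hg
        · exact absurd h1 (by simp)
        · exact absurd h2 (by rw [hfB1, ← hE]; exact lt_irrefl B.t)
      · refine Or.inr ⟨?_, ?_⟩
        · rw [Vl_of_le le_rfl, hfv, hfB1]
        · rw [Dl_of_le le_rfl, hfd]
  · -- t < p.1
    have hm : max p.1 B.fB.1 = p.1 := max_eq_left (by rw [hfB1]; exact hB.t_least p.1)
    have hVf : B.Vl p.1 B.fB = B.unit p.1 := by
      rw [Vl_of_lt (by rw [hfB1]; exact hlt : B.fB.1 < p.1), hfB1, hfv,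
        hB.tr_unit B.t p.1 hlt.le]
    have hDf : B.Dl p.1 B.fB = false := Dl_of_lt (by rw [hfB1]; exact hlt)
    have hne : p ≠ B.fB := fun e => absurd (by rw [e, hfB1] : p.1 = B.t) hlt.ne'
    constructor
    · rintro (hg | ⟨e, hd2⟩)
      · exact Or.inl ((glt_iff p B.fB).2 (by rw [hm, hVf]; exact Or.inl hg))
      · exact Or.inl ((glt_iff p B.fB).2 (by
          rw [hm, hVf, hDf]
          exact Or.inr ⟨e, Or.inl ⟨hd2, rfl⟩⟩))
    · rintro (hg | rfl)
      · rw [glt_iff, hm, hVf, hDf] at hg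
        rcases hg with hg | ⟨e, ⟨h1, _⟩ | ⟨_, h2⟩⟩
        · exact Or.inl hg
        · exact Or.inr ⟨e, h1⟩
        · exact absurd h2 (by rw [hfB1]; exact not_lt.2 (hB.t_least p.1))
      · exact absurd rfl hne

lemma fB_idem_KI (h : B.t ∈ B.KI) : B.gmulB B.fB B.fB = B.fB := by
  have hfB1 : B.fB.1 = B.t := fB_fst (B := B)
  have hfv : B.fB.2.1 = B.unit B.t := by rw [fB_eq_KI hB h]
  have hfd : B.fB.2.2 = true := by rw [fB_eq_KI hB h]
  have hVf : B.Vl B.t B.fB = B.unit B.t := by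
    rw [Vl_of_le (le_of_eq hfB1.symm), hfv]
  have hDfT : B.Dl B.t B.fB = true := by
    rw [Dl_of_le (le_of_eq hfB1.symm), hfd]
  refine Prod.ext ?_ (Prod.ext ?_ ?_)
  · rw [gmulB_fst, max_self]
  · rw [gmulB_val, max_self, hfB1, hVf, hfv]
    exact hB.mul_unit' B.t _ (hB.unit_mem B.t)
  · apply bool_eq_of_iff
    rw [gmulB_dot_iff, max_self, hfB1, hVf, hfd]
    refine iff_of_true ⟨h, ?_, ?_⟩ rfl
    · rw [hB.mul_unit' B.t _ (hB.unit_mem B.t)]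
      exact (hB.g2_sub B.t h).2.1
    · rintro ⟨⟨_, hu⟩, _⟩
      rw [hDfT] at hu
      exact absurd hu (by simp)

end Final


end BunchData
/-- Representation, direction B: for every bunch of layer groups `𝒢`,
the structure `X_𝒢 = (X, ≤, ·, →, t, f)` constructed from `𝒢` (on the carrier
`⋃̇ L_u`, `L_u = G_u ⊔ •H_u` for `u ∈ κ_I` and `L_u = G_u` otherwise) is an involutive
FL_e-chain whose residual complement is `x ↦ x^⊥`; moreover it is odd if `t ∈ κ_o`,
even with non-idempotent falsum if `t ∈ κ_J`, and even with idempotent falsum if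
`t ∈ κ_I`. -/
theorem chainOfBunch_isChain {K : Type u} {Λ : Type v} [LinearOrder K]
    (B : BunchData K Λ) (hB : B.IsBunch) :
    -- the constants belong to the carrier, which is closed under the operations
    B.tB ∈ B.carrier ∧ B.fB ∈ B.carrier ∧
    (∀ p ∈ B.carrier, ∀ q ∈ B.carrier, B.gmulB p q ∈ B.carrier) ∧
    (∀ p ∈ B.carrier, B.negB p ∈ B.carrier) ∧
    (∀ p ∈ B.carrier, ∀ q ∈ B.carrier, B.impB p q ∈ B.carrier) ∧
    -- `≤` is a total order on the carrier, with strict part `<`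
    (∀ p ∈ B.carrier, B.gle p p) ∧
    (∀ p ∈ B.carrier, ∀ q ∈ B.carrier, ∀ r ∈ B.carrier,
      B.gle p q → B.gle q r → B.gle p r) ∧
    (∀ p ∈ B.carrier, ∀ q ∈ B.carrier, B.gle p q → B.gle q p → p = q) ∧
    (∀ p ∈ B.carrier, ∀ q ∈ B.carrier, B.gle p q ∨ B.gle q p) ∧
    (∀ p ∈ B.carrier, ∀ q ∈ B.carrier, (B.glt p q ↔ B.gle p q ∧ p ≠ q)) ∧
    -- `(carrier, ·, t)` is a commutative monoid
    (∀ p ∈ B.carrier, ∀ q ∈ B.carrier, ∀ r ∈ B.carrier,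
      B.gmulB (B.gmulB p q) r = B.gmulB p (B.gmulB q r)) ∧
    (∀ p ∈ B.carrier, ∀ q ∈ B.carrier, B.gmulB p q = B.gmulB q p) ∧
    (∀ p ∈ B.carrier, B.gmulB p B.tB = p) ∧
    -- residuation
    (∀ p ∈ B.carrier, ∀ q ∈ B.carrier, ∀ r ∈ B.carrier,
      (B.gle (B.gmulB p q) r ↔ B.gle q (B.impB p r))) ∧
    -- involutivity, and the residual complement is `x ↦ x^⊥`
    (∀ p ∈ B.carrier, B.negB (B.negB p) = p) ∧
    (∀ p ∈ B.carrier, B.impB p B.fB = B.negB p) ∧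
    -- odd if `t ∈ κ_o`
    (B.t ∈ B.Ko → B.negB B.tB = B.tB) ∧
    -- even with non-idempotent falsum if `t ∈ κ_J`
    (B.t ∈ B.KJ →
      (∀ p ∈ B.carrier, (B.glt p B.tB ↔ B.gle p B.fB)) ∧
      B.gmulB B.fB B.fB ≠ B.fB) ∧
    -- even with idempotent falsum if `t ∈ κ_I`
    (B.t ∈ B.KI →
      (∀ p ∈ B.carrier, (B.glt p B.tB ↔ B.gle p B.fB)) ∧
      B.gmulB B.fB B.fB = B.fB) := by
  refine ⟨tB_mem hB, fB_mem hB,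
    fun p hp q hq => gmulB_mem hB hp hq,
    fun p hp => negB_mem hB hp,
    fun p hp q hq => impB_mem hB hp hq,
    fun p _ => Or.inr rfl,
    fun p hp q hq r hr => gle_trans hB hp hq hr,
    fun p hp q hq => gle_antisymm hB hp hq,
    fun p hp q hq => gle_total' hB hp hq,
    fun p hp q hq => glt_iff_gle_ne hB hp hq,
    fun p hp q hq r hr => gmulB_assoc hB hp hq hr,
    fun p hp q hq => gmulB_comm hB hp hq,
    fun p hp => gmulB_tB hB hp,
    fun p hp q hq r hr => residuationB hB hp hq hr,
    fun p hp => negB_negB hB hp,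
    fun p hp => impB_fB hB hp,
    fun ht => odd_Ko hB ht,
    fun ht => ⟨fun p hp => even_KJ hB ht hp, fB_not_idem_KJ hB ht⟩,
    fun ht => ⟨fun p hp => even_KI hB ht hp, fB_idem_KI hB ht⟩⟩
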